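/- arXiv:2603.04020 — 8 statements merged into one kernel-verified Lean document; each statement's English description precedes it below -/
import Mathlib

section
/- Let X be a locally compact Hausdorff space, μ a positive Radon measure on X, and ν a finite complex Radon measure on X such that for every nonnegative f ∈ C_c(X) one has |∫ f dν| ≤ (∫ f² dμ)^{1/2}. Then ν is absolutely continuous with respect to μ. -/
open MeasureTheory

/-- The integral of a real function against a complex measure, defined via the Jordan
decompositions of the real and imaginary parts:
`∫ f dν = (∫ f dν_re⁺ - ∫ f dν_re⁻) + i (∫ f dν_im⁺ - ∫ f dν_im⁻)`. -/
noncomputable def complexMeasureIntegral {X : Type*} [MeasurableSpace X]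
    (ν : ComplexMeasure X) (f : X → ℝ) : ℂ :=
  Complex.ofReal ((∫ x, f x ∂(ComplexMeasure.re ν).toJordanDecomposition.posPart) -
      ∫ x, f x ∂(ComplexMeasure.re ν).toJordanDecomposition.negPart) +
    Complex.I * Complex.ofReal
      ((∫ x, f x ∂(ComplexMeasure.im ν).toJordanDecomposition.posPart) -
        ∫ x, f x ∂(ComplexMeasure.im ν).toJordanDecomposition.negPart)

/-!
Each Jordan part `p` of `re ν` and `im ν` has a mutually singular partner `n` with
`|∫ f dp - ∫ f dn| ≤ ‖∫ f dν‖`, and all four parts inherit regularity from the total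
variation. So it suffices that `p K = 0` for compact `K` with `μ K = n K = 0`. For an open
`V ⊇ K` and a Urysohn function `f` that is `1` on `K` and supported in `V`, the hypothesis
gives `p K ≤ ∫ f dp ≤ ∫ f dn + √(∫ f² dμ) ≤ n V + √(μ V)`, and outer regularity of `μ`
and `n` makes the right-hand side arbitrarily small.
-/

open scoped ENNReal

namespace MeasureTheory

namespace Measure

variable {α : Type*} [MeasurableSpace α] [TopologicalSpace α] {μ ν : Measure α}

theorem OuterRegular.of_le [IsFiniteMeasure ν] [ν.OuterRegular] (h : μ ≤ ν) :
    μ.OuterRegular := by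
  refine ⟨fun A hA r hr => ?_⟩
  obtain ⟨U, hAU, hU, -, hUA⟩ :=
    hA.exists_isOpen_sdiff_lt (measure_ne_top ν A) (tsub_pos_of_lt hr).ne'
  refine ⟨U, hAU, hU, ?_⟩
  calc μ U ≤ μ A + μ (U \ A) :=
        (measure_le_inter_add_sdiff μ U A).trans
          (add_le_add_left (measure_mono Set.inter_subset_right) _)
    _ < μ A + (r - μ A) :=
        ENNReal.add_lt_add_left (ne_top_of_lt hr) ((h _).trans_lt hUA)
    _ = r := add_tsub_cancel_of_le hr.le

theorem InnerRegularCompactLTTop.of_le [OpensMeasurableSpace α] [T2Space α] [IsFiniteMeasure ν]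
    [ν.InnerRegularCompactLTTop] (h : μ ≤ ν) : μ.InnerRegularCompactLTTop := by
  refine ⟨fun A ⟨hA, _⟩ r hr => ?_⟩
  obtain ⟨K, hKA, hK, hνK⟩ :=
    hA.exists_isCompact_lt_add (measure_ne_top ν A) (tsub_pos_of_lt hr).ne'
  refine ⟨K, hKA, hK, lt_of_tsub_lt_tsub_left (a := μ A) ?_⟩
  calc μ A - μ K ≤ μ (A \ K) := le_measure_sdiff
    _ < μ A - r := (h _).trans_lt <|
        measure_sdiff_lt_of_lt_add hK.nullMeasurableSet hKA (measure_ne_top ν K) hνK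

end Measure

section SqrtBound

variable {X : Type*} [TopologicalSpace X] [MeasurableSpace X] [OpensMeasurableSpace X]
  [T2Space X] [LocallyCompactSpace X] {μ p n : Measure X}

theorem measureReal_sub_measureReal_le_sqrt_of_isCompact_subset_isOpen
    [IsFiniteMeasure p] [IsFiniteMeasure n]
    (hb : ∀ f : X → ℝ, Continuous f → HasCompactSupport f → 0 ≤ f → f ≤ 1 →
      ∫ x, f x ∂p - ∫ x, f x ∂n ≤ √(∫ x, f x ^ 2 ∂μ))
    {K V : Set X} (hK : IsCompact K) (hV : IsOpen V) (hKV : K ⊆ V) (hμV : μ V ≠ ∞) :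
    p.real K - n.real V ≤ √(μ.real V) := by
  obtain ⟨f, hfK, hfV, hfc, hf01⟩ := exists_continuous_one_zero_of_isCompact hK
    hV.isClosed_compl (Set.disjoint_compl_right_iff_subset.2 hKV)
  have hf0 : 0 ≤ ⇑f := fun x => (hf01 x).1
  have hf1 : ⇑f ≤ 1 := fun x => (hf01 x).2
  have hKf : K.indicator 1 ≤ ⇑f := by
    intro x
    by_cases hx : x ∈ K
    · simp [hx, hfK hx]
    · simpa [hx] using (hf01 x).1
  have hfV' : ⇑f ≤ V.indicator 1 := by
    intro x
    by_cases hx : x ∈ V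
    · simpa [hx] using (hf01 x).2
    · simp [hx, hfV hx]
  have hfint (ρ : Measure X) [IsFiniteMeasure ρ] : Integrable f ρ :=
    f.continuous.integrable_of_hasCompactSupport hfc
  have hμVint : Integrable (V.indicator 1) μ :=
    (integrable_indicator_iff hV.measurableSet).2 (integrableOn_const (C := (1 : ℝ)) hμV)
  rw [← integral_indicator_one hK.measurableSet, ← integral_indicator_one hV.measurableSet,
    ← integral_indicator_one hV.measurableSet]
  calc ∫ x, K.indicator 1 x ∂p - ∫ x, V.indicator 1 x ∂n
        ≤ ∫ x, f x ∂p - ∫ x, f x ∂n :=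
        sub_le_sub
          (integral_mono ((integrable_const 1).indicator hK.measurableSet) (hfint p) hKf)
          (integral_mono (hfint n) ((integrable_const 1).indicator hV.measurableSet) hfV')
    _ ≤ √(∫ x, f x ^ 2 ∂μ) := hb f f.continuous hfc hf0 hf1
    _ ≤ √(∫ x, V.indicator 1 x ∂μ) := Real.sqrt_le_sqrt <|
        integral_mono_of_nonneg (.of_forall fun x => sq_nonneg _) hμVint
          (.of_forall fun x => (sq_le (hf0 x) (hf1 x)).trans (hfV' x))

theorem measure_isCompact_eq_zero_of_integral_sub_le_sqrt [μ.OuterRegular] [n.OuterRegular]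
    [IsFiniteMeasure p] [IsFiniteMeasure n]
    (hb : ∀ f : X → ℝ, Continuous f → HasCompactSupport f → 0 ≤ f → f ≤ 1 →
      ∫ x, f x ∂p - ∫ x, f x ∂n ≤ √(∫ x, f x ^ 2 ∂μ))
    {K : Set X} (hK : IsCompact K) (hμK : μ K = 0) (hnK : n K = 0) : p K = 0 := by
  suffices p.real K ≤ 0 from
    (measureReal_eq_zero_iff (measure_ne_top p K)).1 (this.antisymm measureReal_nonneg)
  refine le_of_forall_pos_le_add fun ε hε => ?_
  obtain ⟨U, hKU, hU, hμU⟩ := K.exists_isOpen_lt_of_lt (ENNReal.ofReal ((ε / 2) ^ 2))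
    (by rw [hμK]; exact ENNReal.ofReal_pos.2 (by positivity))
  obtain ⟨W, hKW, hW, hnW⟩ := K.exists_isOpen_lt_of_lt (ENNReal.ofReal (ε / 2))
    (by rw [hnK]; exact ENNReal.ofReal_pos.2 (by positivity))
  have hμUW : μ (U ∩ W) < ENNReal.ofReal ((ε / 2) ^ 2) :=
    (measure_mono Set.inter_subset_left).trans_lt hμU
  have hnUW : n.real (U ∩ W) < ε / 2 :=
    ENNReal.toReal_lt_of_lt_ofReal ((measure_mono Set.inter_subset_right).trans_lt hnW)
  have hsqrt : √(μ.real (U ∩ W)) ≤ ε / 2 :=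
    (Real.sqrt_le_left (by positivity)).2 (ENNReal.toReal_lt_of_lt_ofReal hμUW).le
  have := measureReal_sub_measureReal_le_sqrt_of_isCompact_subset_isOpen hb hK (hU.inter hW)
    (Set.subset_inter hKU hKW) hμUW.ne_top
  linarith

theorem absolutelyContinuous_of_integral_sub_le_sqrt [μ.OuterRegular] [n.OuterRegular]
    [p.InnerRegularCompactLTTop] [IsFiniteMeasure p] [IsFiniteMeasure n]
    (hb : ∀ f : X → ℝ, Continuous f → HasCompactSupport f → 0 ≤ f → f ≤ 1 →
      ∫ x, f x ∂p - ∫ x, f x ∂n ≤ √(∫ x, f x ^ 2 ∂μ))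
    (hpn : p ⟂ₘ n) : p ≪ μ := by
  refine Measure.AbsolutelyContinuous.mk fun A hA hμA => ?_
  set B := A ∩ hpn.nullSetᶜ
  have hB : MeasurableSet B := hA.inter hpn.measurableSet_nullSet.compl
  have hpB : p B = 0 := by
    rw [hB.measure_eq_iSup_isCompact_of_ne_top (measure_ne_top p B)]
    simp only [ENNReal.iSup_eq_zero]
    exact fun K hKB hK => measure_isCompact_eq_zero_of_integral_sub_le_sqrt hb hK
      (measure_mono_null (hKB.trans Set.inter_subset_left) hμA)
      (measure_mono_null (hKB.trans Set.inter_subset_right) hpn.measure_compl_nullSet)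
  rwa [measure_inter_conull (by rw [compl_compl]; exact hpn.measure_nullSet)] at hpB

theorem SignedMeasure.totalVariation_absolutelyContinuous_of_abs_integral_le_sqrt
    [μ.OuterRegular] (s : SignedMeasure X) [s.totalVariation.OuterRegular]
    [s.totalVariation.InnerRegularCompactLTTop]
    (hs : ∀ f : X → ℝ, Continuous f → HasCompactSupport f → 0 ≤ f → f ≤ 1 →
      |∫ x, f x ∂s.toJordanDecomposition.posPart -
          ∫ x, f x ∂s.toJordanDecomposition.negPart| ≤ √(∫ x, f x ^ 2 ∂μ)) :
    s.totalVariation ≪ μ := by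
  have hpos : s.toJordanDecomposition.posPart ≤ s.totalVariation := Measure.le_add_right le_rfl
  have hneg : s.toJordanDecomposition.negPart ≤ s.totalVariation := Measure.le_add_left le_rfl
  have := Measure.OuterRegular.of_le hpos
  have := Measure.OuterRegular.of_le hneg
  have := Measure.InnerRegularCompactLTTop.of_le hpos
  have := Measure.InnerRegularCompactLTTop.of_le hneg
  rw [totalVariation_absolutelyContinuous_iff]
  exact ⟨absolutelyContinuous_of_integral_sub_le_sqrt
      (fun f hf hfc hf0 hf1 => (le_abs_self _).trans (hs f hf hfc hf0 hf1))
      s.toJordanDecomposition.mutuallySingular,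
    absolutelyContinuous_of_integral_sub_le_sqrt
      (fun f hf hfc hf0 hf1 => (le_abs_self _).trans ((abs_sub_comm _ _).trans_le
        (hs f hf hfc hf0 hf1)))
      s.toJordanDecomposition.mutuallySingular.symm⟩

end SqrtBound

end MeasureTheory

theorem re_complexMeasureIntegral {X : Type*} [MeasurableSpace X] (ν : ComplexMeasure X)
    (f : X → ℝ) :
    (complexMeasureIntegral ν f).re =
      ∫ x, f x ∂(ComplexMeasure.re ν).toJordanDecomposition.posPart -
        ∫ x, f x ∂(ComplexMeasure.re ν).toJordanDecomposition.negPart := by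
  simp [complexMeasureIntegral]

theorem im_complexMeasureIntegral {X : Type*} [MeasurableSpace X] (ν : ComplexMeasure X)
    (f : X → ℝ) :
    (complexMeasureIntegral ν f).im =
      ∫ x, f x ∂(ComplexMeasure.im ν).toJordanDecomposition.posPart -
        ∫ x, f x ∂(ComplexMeasure.im ν).toJordanDecomposition.negPart := by
  simp [complexMeasureIntegral]

/-- Let `X` be a locally compact Hausdorff space, `μ` a positive Radon
measure on `X` and `ν` a (finite) complex Radon measure on `X` such that
`|∫ f dν| ≤ (∫ f² dμ)^{1/2}` for every nonnegative `f ∈ C_c(X)`.  Then `ν` is absolutely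
continuous with respect to `μ`: every Borel set `A` with `μ A = 0` satisfies `ν A = 0`. -/
theorem complexMeasure_absolutelyContinuous_of_sq_integral_bound
    {X : Type*} [TopologicalSpace X] [T2Space X] [LocallyCompactSpace X]
    [MeasurableSpace X] [BorelSpace X]
    (μ : Measure X) (hμ : μ.Regular)
    (ν : ComplexMeasure X)
    (hν : ((ComplexMeasure.re ν).totalVariation +
      (ComplexMeasure.im ν).totalVariation).Regular)
    (hbound : ∀ f : X → ℝ, Continuous f → HasCompactSupport f → 0 ≤ f →
      ‖complexMeasureIntegral ν f‖ ≤ Real.sqrt (∫ x, (f x) ^ 2 ∂μ)) :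
    ∀ A : Set X, MeasurableSet A → μ A = 0 → ν A = 0 := by
  have hre_le : (ComplexMeasure.re ν).totalVariation ≤
      (ComplexMeasure.re ν).totalVariation + (ComplexMeasure.im ν).totalVariation :=
    Measure.le_add_right le_rfl
  have him_le : (ComplexMeasure.im ν).totalVariation ≤
      (ComplexMeasure.re ν).totalVariation + (ComplexMeasure.im ν).totalVariation :=
    Measure.le_add_left le_rfl
  have := Measure.OuterRegular.of_le hre_le
  have := Measure.OuterRegular.of_le him_le
  have := Measure.InnerRegularCompactLTTop.of_le hre_le
  have := Measure.InnerRegularCompactLTTop.of_le him_le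
  have hre := (ComplexMeasure.re ν).totalVariation_absolutelyContinuous_of_abs_integral_le_sqrt
    fun f hf hfc hf0 _ => re_complexMeasureIntegral ν f ▸
      (Complex.abs_re_le_norm _).trans (hbound f hf hfc hf0)
  have him := (ComplexMeasure.im ν).totalVariation_absolutelyContinuous_of_abs_integral_le_sqrt
    fun f hf hfc hf0 _ => im_complexMeasureIntegral ν f ▸
      (Complex.abs_im_le_norm _).trans (hbound f hf hfc hf0)
  intro A _ hμA
  exact Complex.ext (SignedMeasure.null_of_totalVariation_zero _ (hre hμA))
    (SignedMeasure.null_of_totalVariation_zero _ (him hμA))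
end

section
/- Let μ be a Radon measure on a locally compact Hausdorff space X. Then the semifinite part μ_sf, defined by μ_sf(A) = sup{ μ(B) : B ⊆ A Borel, μ(B) < ∞ }, is a semifinite Borel measure on X that is inner regular (by compact sets) on all Borel sets. -/
open MeasureTheory
open scoped ENNReal

/-- The semifinite part of a measure:
`μ_sf(A) = sup { μ(B) : B ⊆ A Borel, μ(B) < ∞ }`. -/
noncomputable def semifinitePart {X : Type*} [MeasurableSpace X] (μ : Measure X)
    (A : Set X) : ℝ≥0∞ :=
  ⨆ (B : Set X) (_ : MeasurableSet B) (_ : B ⊆ A) (_ : μ B ≠ ⊤), μ B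

/-!
On measurable sets `μ_sf` is countably additive: superadditivity comes from taking unions of
finite-measure subsets of the pieces, subadditivity from cutting a finite-measure subset of the
union along the partition. Semifiniteness is built into the definition. Inner regularity is
inherited from that of the Radon measure `μ` on measurable sets of finite measure, since a
compact set has finite `μ`-measure and hence the same `μ_sf`- and `μ`-measure.
-/

section SemifinitePart

variable {X : Type*} [MeasurableSpace X] (μ : Measure X)

lemma semifinitePart_eq_iSup_and (A : Set X) :
    semifinitePart μ A = ⨆ (B : Set X) (_ : MeasurableSet B ∧ B ⊆ A ∧ μ B ≠ ⊤), μ B := by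
  simp only [semifinitePart, iSup_and]

lemma le_semifinitePart {A B : Set X} (hB : MeasurableSet B) (hBA : B ⊆ A) (hfin : μ B ≠ ⊤) :
    μ B ≤ semifinitePart μ A :=
  le_iSup₂_of_le B hB <| le_iSup₂_of_le hBA hfin le_rfl

lemma lt_semifinitePart_iff {A : Set X} {c : ℝ≥0∞} :
    c < semifinitePart μ A ↔ ∃ B, MeasurableSet B ∧ B ⊆ A ∧ μ B ≠ ⊤ ∧ c < μ B := by
  simp only [semifinitePart, lt_iSup_iff, exists_prop]

lemma semifinitePart_le_measure (A : Set X) : semifinitePart μ A ≤ μ A :=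
  iSup₂_le fun _ _ ↦ iSup₂_le fun hBA _ ↦ measure_mono hBA

lemma semifinitePart_eq_measure_of_ne_top {B : Set X} (hB : MeasurableSet B) (hfin : μ B ≠ ⊤) :
    semifinitePart μ B = μ B :=
  (semifinitePart_le_measure μ B).antisymm (le_semifinitePart μ hB subset_rfl hfin)

lemma semifinitePart_empty : semifinitePart μ ∅ = 0 :=
  nonpos_iff_eq_zero.1 <| (semifinitePart_le_measure μ ∅).trans_eq measure_empty

lemma semifinitePart_mono {A A' : Set X} (h : A ⊆ A') :
    semifinitePart μ A ≤ semifinitePart μ A' :=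
  iSup₂_le fun _ hB ↦ iSup₂_le fun hBA hfin ↦ le_semifinitePart μ hB (hBA.trans h) hfin

lemma semifinitePart_add_le_union {A A' : Set X} (hd : Disjoint A A') :
    semifinitePart μ A + semifinitePart μ A' ≤ semifinitePart μ (A ∪ A') := by
  rw [semifinitePart_eq_iSup_and μ A, semifinitePart_eq_iSup_and μ A']
  have hempty : ∀ C : Set X, MeasurableSet (∅ : Set X) ∧ ∅ ⊆ C ∧ μ ∅ ≠ ⊤ := fun _ ↦
    ⟨.empty, Set.empty_subset _, by simp⟩
  refine ENNReal.biSup_add_biSup_le' ⟨∅, hempty A⟩ ⟨∅, hempty A'⟩ ?_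
  rintro B ⟨hB, hBA, hBfin⟩ C ⟨hC, hCA, hCfin⟩
  rw [← measure_union (hd.mono hBA hCA) hC]
  exact le_semifinitePart μ (hB.union hC) (Set.union_subset_union hBA hCA)
    (measure_union_ne_top hBfin hCfin)

lemma sum_semifinitePart_le_biUnion {ι : Type*} {f : ι → Set X}
    (hd : Pairwise (Function.onFun Disjoint f)) (s : Finset ι) :
    ∑ i ∈ s, semifinitePart μ (f i) ≤ semifinitePart μ (⋃ i ∈ s, f i) := by
  classical
  induction s using Finset.induction_on with
  | empty => simp [semifinitePart_empty]
  | @insert a s ha ih =>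
    have hdisj : Disjoint (f a) (⋃ i ∈ s, f i) :=
      Set.disjoint_iUnion₂_right.2 fun i hi ↦ hd fun h ↦ ha (h ▸ hi)
    calc ∑ i ∈ insert a s, semifinitePart μ (f i)
        = semifinitePart μ (f a) + ∑ i ∈ s, semifinitePart μ (f i) := Finset.sum_insert ha
      _ ≤ semifinitePart μ (f a) + semifinitePart μ (⋃ i ∈ s, f i) := by gcongr
      _ ≤ semifinitePart μ (⋃ i ∈ insert a s, f i) := by
        rw [Finset.set_biUnion_insert]
        exact semifinitePart_add_le_union μ hdisj

lemma semifinitePart_iUnion {ι : Type*} [Countable ι] {f : ι → Set X}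
    (hf : ∀ i, MeasurableSet (f i)) (hd : Pairwise (Function.onFun Disjoint f)) :
    semifinitePart μ (⋃ i, f i) = ∑' i, semifinitePart μ (f i) := by
  refine le_antisymm ?_ ?_
  · refine iSup₂_le fun B hB ↦ iSup₂_le fun hBU hBfin ↦ ?_
    have hpieces : ∀ i, MeasurableSet (B ∩ f i) := fun i ↦ hB.inter (hf i)
    calc μ B = μ (⋃ i, B ∩ f i) := by rw [← Set.inter_iUnion, Set.inter_eq_left.2 hBU]
      _ = ∑' i, μ (B ∩ f i) :=
        measure_iUnion (fun i j hij ↦ (hd hij).mono Set.inter_subset_right Set.inter_subset_right)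
          hpieces
      _ ≤ ∑' i, semifinitePart μ (f i) := ENNReal.tsum_le_tsum fun i ↦
        le_semifinitePart μ (hpieces i) Set.inter_subset_right
          (measure_ne_top_of_subset Set.inter_subset_left hBfin)
  · rw [ENNReal.tsum_eq_iSup_sum]
    exact iSup_le fun s ↦ (sum_semifinitePart_le_biUnion μ hd s).trans <|
      semifinitePart_mono μ <| Set.iUnion₂_subset fun i _ ↦ Set.subset_iUnion f i

noncomputable def semifinitePartMeasure : Measure X :=
  Measure.ofMeasurable (fun A _ ↦ semifinitePart μ A) (semifinitePart_empty μ)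
    fun _ hf hd ↦ semifinitePart_iUnion μ hf hd

lemma semifinitePartMeasure_apply {A : Set X} (hA : MeasurableSet A) :
    semifinitePartMeasure μ A = semifinitePart μ A :=
  Measure.ofMeasurable_apply A hA

lemma semifinitePartMeasure_apply_of_ne_top {B : Set X} (hB : MeasurableSet B) (hfin : μ B ≠ ⊤) :
    semifinitePartMeasure μ B = μ B := by
  rw [semifinitePartMeasure_apply μ hB, semifinitePart_eq_measure_of_ne_top μ hB hfin]

lemma semifinitePartMeasure_exists_pos_lt_top {A : Set X} (hA : MeasurableSet A)
    (htop : semifinitePartMeasure μ A = ⊤) :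
    ∃ B, MeasurableSet B ∧ B ⊆ A ∧ 0 < semifinitePartMeasure μ B ∧
      semifinitePartMeasure μ B < ⊤ := by
  rw [semifinitePartMeasure_apply μ hA] at htop
  obtain ⟨B, hB, hBA, hBfin, hpos⟩ :=
    (lt_semifinitePart_iff μ).1 (htop ▸ ENNReal.zero_lt_top)
  refine ⟨B, hB, hBA, ?_⟩
  rw [semifinitePartMeasure_apply_of_ne_top μ hB hBfin]
  exact ⟨hpos, hBfin.lt_top⟩

end SemifinitePart

lemma semifinitePart_eq_iSup_isCompact {X : Type*} [TopologicalSpace X] [T2Space X]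
    [MeasurableSpace X] [BorelSpace X] (μ : Measure X) [μ.InnerRegularCompactLTTop]
    [IsFiniteMeasureOnCompacts μ] (A : Set X) :
    semifinitePart μ A = ⨆ (K : Set X) (_ : IsCompact K) (_ : K ⊆ A), μ K := by
  refine le_antisymm (iSup₂_le fun B hB ↦ iSup₂_le fun hBA hBfin ↦ ?_)
    (iSup₂_le fun K hK ↦ iSup_le fun hKA ↦
      le_semifinitePart μ hK.measurableSet hKA hK.measure_lt_top.ne)
  rw [hB.measure_eq_iSup_isCompact_of_ne_top hBfin]
  exact iSup₂_le fun K hKB ↦ iSup_le fun hK ↦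
    le_iSup₂_of_le K hK <| le_iSup_of_le (hKB.trans hBA) le_rfl

theorem semifinitePart_isMeasure_semifinite_innerRegular_general
    {X : Type*} [TopologicalSpace X] [T2Space X]
    [MeasurableSpace X] [BorelSpace X]
    (μ : Measure X) (hμ : μ.Regular) :
    ∃ ν : Measure X,
      (∀ A : Set X, MeasurableSet A → ν A = semifinitePart μ A) ∧
      (∀ A : Set X, MeasurableSet A → ν A = ⊤ →
        ∃ B : Set X, MeasurableSet B ∧ B ⊆ A ∧ 0 < ν B ∧ ν B < ⊤) ∧
      (∀ A : Set X, MeasurableSet A →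
        ν A = ⨆ (K : Set X) (_ : IsCompact K) (_ : K ⊆ A), ν K) := by
  refine ⟨semifinitePartMeasure μ, fun A hA ↦ semifinitePartMeasure_apply μ hA,
    fun A hA ↦ semifinitePartMeasure_exists_pos_lt_top μ hA, fun A hA ↦ ?_⟩
  have hcompact : ∀ K : Set X, IsCompact K → semifinitePartMeasure μ K = μ K := fun K hK ↦
    semifinitePartMeasure_apply_of_ne_top μ hK.measurableSet hK.measure_lt_top.ne
  rw [semifinitePartMeasure_apply μ hA, semifinitePart_eq_iSup_isCompact μ A]
  exact iSup_congr fun K ↦ iSup_congr fun hK ↦ by rw [hcompact K hK]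

/-- Let `μ` be a Radon measure on a locally compact Hausdorff space `X`.
Then the semifinite part `μ_sf` is a Borel measure on `X` which is semifinite and inner
regular by compact sets on all Borel sets. -/
theorem semifinitePart_isMeasure_semifinite_innerRegular
    {X : Type*} [TopologicalSpace X] [T2Space X] [LocallyCompactSpace X]
    [MeasurableSpace X] [BorelSpace X]
    (μ : Measure X) (hμ : μ.Regular) :
    ∃ ν : Measure X,
      (∀ A : Set X, MeasurableSet A → ν A = semifinitePart μ A) ∧
      (∀ A : Set X, MeasurableSet A → ν A = ⊤ →
        ∃ B : Set X, MeasurableSet B ∧ B ⊆ A ∧ 0 < ν B ∧ ν B < ⊤) ∧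
      (∀ A : Set X, MeasurableSet A →
        ν A = ⨆ (K : Set X) (_ : IsCompact K) (_ : K ⊆ A), ν K) :=
  semifinitePart_isMeasure_semifinite_innerRegular_general μ hμ
end

section
/- Let X = ℝ × ℝ_d, where ℝ_d is ℝ with the discrete topology, and let μ be a Haar measure on the locally compact group X. Then the fixed-point set {0} × ℝ_d of the homeomorphism s(x,y) = (−x,y) satisfies μ({0} × ℝ_d) = +∞, while every compact subset K of {0} × ℝ_d satisfies μ(K) = 0. -/
/-!
Compact subsets of `{0} × ℝ_d` have finite projection to the discrete factor, so they are finite,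
hence null. By outer regularity it suffices that every open `U ⊇ {0} × ℝ_d` has infinite measure:
each `(0, y)` has a neighbourhood `ball 0 (1 / (n + 1)) × {y}` inside `U`, uncountably many `y`
share the same `n`, and `U` then contains infinitely many disjoint translates of one nonempty open
set.
-/

open MeasureTheory
open scoped ENNReal

/-- The real line with the discrete topology. -/
def Rd : Type := ℝ

instance : AddCommGroup Rd := inferInstanceAs (AddCommGroup ℝ)
instance : TopologicalSpace Rd := ⊥
instance : DiscreteTopology Rd := ⟨rfl⟩
instance : IsTopologicalAddGroup Rd where
  continuous_add := continuous_of_discreteTopology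
  continuous_neg := continuous_of_discreteTopology
instance : MeasurableSpace Rd := ⊤

open Filter Function Metric Set Topology

instance : BorelSpace Rd := ⟨borel_eq_top_of_discrete.symm⟩

instance : Uncountable Rd := inferInstanceAs (Uncountable ℝ)

-- Makes Haar measures on `ℝ × Rd` atomless (`IsAddHaarMeasure.noAtoms`).
instance Prod.nhdsNE_neBot_of_fst {α β : Type*} [TopologicalSpace α] [TopologicalSpace β]
    (p : α × β) [NeBot (𝓝[≠] p.1)] : NeBot (𝓝[≠] p) :=
  ((Continuous.prodMk_left p.2).continuousWithinAt.tendsto_nhdsWithin (s := {p.1}ᶜ)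
    (t := {p}ᶜ) fun _ hx h => hx (congrArg Prod.fst h)).neBot

theorem setOf_neg_fst_eq_self {G H : Type*} [AddGroup G] [IsAddTorsionFree G] :
    {p : G × H | (-p.1, p.2) = p} = {0} ×ˢ univ := by
  ext p
  simp [Prod.ext_iff, neg_eq_self]

theorem IsCompact.finite_of_subset_prod_univ {α β : Type*} [TopologicalSpace α]
    [TopologicalSpace β] [DiscreteTopology β] {K : Set (α × β)} {s : Set α} (hK : IsCompact K)
    (hs : s.Finite) (hKs : K ⊆ s ×ˢ univ) : K.Finite := by
  have hsnd : (Prod.snd '' K).Finite :=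
    (hK.image continuous_snd).finite DiscreteTopology.isDiscrete
  exact (hs.prod hsnd).subset fun p hp => ⟨(hKs hp).1, p, hp, rfl⟩

theorem exists_ball_prod_infinite_subset_of_isOpen {G H : Type*} [PseudoMetricSpace G]
    [TopologicalSpace H] [DiscreteTopology H] [Uncountable H] {a : G} {U : Set (G × H)}
    (hU : IsOpen U) (haU : {a} ×ˢ univ ⊆ U) :
    ∃ r > (0 : ℝ), ∃ T : Set H, T.Infinite ∧ ball a r ×ˢ T ⊆ U := by
  have hslice (t : H) : ∃ n : ℕ, ball a (1 / (n + 1)) ×ˢ {t} ⊆ U := by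
    have : (·, t) ⁻¹' U ∈ 𝓝 a :=
      (hU.preimage (Continuous.prodMk_left t)).mem_nhds (haU ⟨rfl, trivial⟩)
    obtain ⟨n, -, hn⟩ := nhds_basis_ball_inv_nat_succ.mem_iff.1 this
    refine ⟨n, ?_⟩
    rintro ⟨x, s⟩ ⟨hx, rfl : s = t⟩
    exact hn hx
  choose n hn using hslice
  obtain ⟨m, hm⟩ : ∃ m, (n ⁻¹' {m}).Infinite := by
    by_contra! hfin
    exact not_countable_univ ((countable_iUnion fun m => (hfin m).countable).mono
      fun t _ => mem_iUnion.2 ⟨n t, rfl⟩)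
  refine ⟨1 / (m + 1), Nat.one_div_pos_of_nat, n ⁻¹' {m}, hm, ?_⟩
  rintro ⟨x, t⟩ ⟨hx, ht : n t = m⟩
  exact hn t ⟨ht ▸ hx, rfl⟩

theorem measure_prod_eq_top_of_isOpen_of_infinite {G H : Type*} [TopologicalSpace G] [AddGroup G]
    [MeasurableSpace G] [OpensMeasurableSpace G] [TopologicalSpace H] [DiscreteTopology H]
    [AddGroup H] [MeasurableSpace H] [MeasurableSingletonClass H]
    [MeasurableAdd (G × H)] (μ : Measure (G × H))
    [μ.IsAddLeftInvariant] [μ.IsOpenPosMeasure] {V : Set G} (hV : IsOpen V) (hVne : V.Nonempty)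
    {T : Set H} (hT : T.Infinite) : μ (V ×ˢ T) = ∞ := by
  have hslice (t : H) : μ (V ×ˢ {t}) = μ (V ×ˢ {0}) := by
    rw [← measure_preimage_add μ (0, t)]
    congr 1
    ext p
    simp
  have hpos : μ (V ×ˢ {0}) ≠ 0 := by
    obtain ⟨x, hx⟩ := hVne
    exact ((hV.prod (isOpen_discrete {0})).measure_pos μ ⟨(x, 0), hx, rfl⟩).ne'
  set f := hT.natEmbedding
  have hdisj : Pairwise (Disjoint on fun k => V ×ˢ {(f k : H)}) := fun k l hkl =>
    Set.disjoint_prod.2 (Or.inr (disjoint_singleton.2 fun h => hkl (f.injective (Subtype.ext h))))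
  refine measure_mono_top (iUnion_subset fun k => prod_mono subset_rfl
    (singleton_subset_iff.2 (f k).2)) ?_
  rw [measure_iUnion hdisj fun k => hV.measurableSet.prod (measurableSet_singleton _)]
  simp only [hslice]
  exact ENNReal.tsum_const_eq_top_of_ne_zero hpos

theorem haar_fixedSet_infinite_but_compact_null_general
    (μ : Measure (ℝ × Rd)) (hHaar : μ.IsAddHaarMeasure)
    (houter : μ.OuterRegular) :
    {p : ℝ × Rd | ((-p.1, p.2) : ℝ × Rd) = p} = ({0} ×ˢ (Set.univ : Set Rd)) ∧
    μ ({0} ×ˢ (Set.univ : Set Rd)) = ⊤ ∧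
    (∀ K : Set (ℝ × Rd), K ⊆ {0} ×ˢ (Set.univ : Set Rd) → IsCompact K → μ K = 0) := by
  refine ⟨setOf_neg_fst_eq_self, ?_, fun K hK0 hK =>
    (hK.finite_of_subset_prod_univ (finite_singleton 0) hK0).measure_zero μ⟩
  rw [Set.measure_eq_iInf_isOpen]
  simp only [iInf_eq_top]
  intro U h0U hU
  obtain ⟨r, hr, T, hT, hrTU⟩ := exists_ball_prod_infinite_subset_of_isOpen hU h0U
  exact measure_mono_top hrTU
    (measure_prod_eq_top_of_isOpen_of_infinite μ isOpen_ball ⟨0, mem_ball_self hr⟩ hT)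

/-- Let `X = ℝ × ℝ_d` (the plane with the usual topology in the first
coordinate and the discrete topology in the second) and let `μ` be a Haar measure on the
locally compact group `X` (outer regular on Borel sets, inner regular on open sets).  The
fixed-point set of the homeomorphism `s(x, y) = (−x, y)` is `{0} × ℝ_d`; it has infinite
measure, while all of its compact subsets are null. -/
theorem haar_fixedSet_infinite_but_compact_null
    (μ : Measure (ℝ × Rd)) (hHaar : μ.IsAddHaarMeasure)
    (houter : μ.OuterRegular)
    (hinner : ∀ U : Set (ℝ × Rd), IsOpen U →
      μ U = ⨆ (K : Set (ℝ × Rd)) (_ : IsCompact K) (_ : K ⊆ U), μ K) :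
    {p : ℝ × Rd | ((-p.1, p.2) : ℝ × Rd) = p} = ({0} ×ˢ (Set.univ : Set Rd)) ∧
    μ ({0} ×ˢ (Set.univ : Set Rd)) = ⊤ ∧
    (∀ K : Set (ℝ × Rd), K ⊆ {0} ×ˢ (Set.univ : Set Rd) → IsCompact K → μ K = 0) :=
  haar_fixedSet_infinite_but_compact_null_general μ hHaar houter
end

section
/- Let X be a finite set with |X| ≥ 2 and let φ be an automorphism of the rooted tree X* of finite words over X. For k ≥ 0 define P_k = { w ∈ X^k : φ(w) = w and φ|_w ≠ id }. Suppose there exists p > 0 such that for every finite word w with φ|_w ≠ id there is u ∈ X^p with φ|_w(u) ≠ u. Then for every k ≥ 0, |P_{pk}| ≤ (|X|^p − 1)^k. -/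
/-- An automorphism of the rooted tree `X*` of finite words over `X`: a bijection of
`List X` preserving lengths and prefixes. -/
structure TreeAut (X : Type*) where
  toFun : List X → List X
  invFun : List X → List X
  left_inv : Function.LeftInverse invFun toFun
  right_inv : Function.RightInverse invFun toFun
  length_eq : ∀ w : List X, (toFun w).length = w.length
  take_append : ∀ w v : List X, (toFun (w ++ v)).take w.length = toFun w

/-- The restriction (section) `φ|_w` of a tree automorphism `φ` at the word `w`,
characterised by `φ(w v) = φ(w) φ|_w(v)`. -/
def TreeAut.restrict {X : Type*} (φ : TreeAut X) (w : List X) : List X → List X :=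
  fun v => (φ.toFun (w ++ v)).drop w.length

/-- The set `P_k` of words of length `k` fixed by `φ` whose restriction is nontrivial. -/
def TreeAut.badWords {X : Type*} (φ : TreeAut X) (k : ℕ) : Set (List X) :=
  {w : List X | w.length = k ∧ φ.toFun w = w ∧ φ.restrict w ≠ id}

/-!
A word of `P_{n+p}` is a word `a ∈ P_n` followed by a tail `u ∈ X^p` fixed by `φ|_a`.
Since `φ|_a ≠ id`, the hypothesis provides a word of `X^p` that `φ|_a` moves, so each
`a ∈ P_n` has at most `|X|^p - 1` extensions in `P_{n+p}`; induction on `k` gives the bound.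
-/

theorem Set.ncard_le_mul_ncard_of_mapsTo {α β : Type*} {s : Set α} {t : Set β} {f : α → β}
    (hs : s.Finite) (ht : t.Finite) (hf : Set.MapsTo f s t) (n : ℕ)
    (hn : ∀ b ∈ t, {a ∈ s | f a = b}.ncard ≤ n) : s.ncard ≤ n * t.ncard := by
  classical
  obtain ⟨s, rfl⟩ := hs.exists_finset_coe
  obtain ⟨t, rfl⟩ := ht.exists_finset_coe
  simp only [Set.ncard_coe_finset]
  refine Finset.card_le_mul_card_image_of_maps_to hf n fun b hb => ?_
  simpa [← Finset.coe_filter] using hn b hb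

theorem List.ncard_setOf_length_eq (X : Type*) [Fintype X] (n : ℕ) :
    {l : List X | l.length = n}.ncard = Fintype.card X ^ n := by
  rw [← Nat.card_coe_set_eq, ← card_vector n, ← Nat.card_eq_fintype_card]
  rfl

namespace TreeAut

variable {X : Type*} (φ : TreeAut X)

theorem toFun_append (w v : List X) :
    φ.toFun (w ++ v) = φ.toFun w ++ φ.restrict w v := by
  conv_lhs => rw [← List.take_append_drop w.length (φ.toFun (w ++ v)), φ.take_append]
  rfl

theorem toFun_append_eq_self_iff (w v : List X) :
    φ.toFun (w ++ v) = w ++ v ↔ φ.toFun w = w ∧ φ.restrict w v = v := by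
  rw [toFun_append]
  exact ⟨fun h => List.append_inj h (φ.length_eq w), fun ⟨hw, hv⟩ => by rw [hw, hv]⟩

theorem restrict_append (w u v : List X) :
    φ.restrict (w ++ u) v = (φ.restrict w (u ++ v)).drop u.length := by
  simp only [restrict, List.append_assoc, List.drop_drop, List.length_append]

theorem restrict_append_eq_id {w : List X} (h : φ.restrict w = id) (u : List X) :
    φ.restrict (w ++ u) = id := by
  funext v
  simp [restrict_append, h]

theorem badWords_finite [Finite X] (k : ℕ) : (φ.badWords k).Finite :=
  (List.finite_length_eq X k).subset fun _ hw => hw.1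

theorem take_mem_badWords_and_restrict_drop {n q : ℕ} {w : List X}
    (hw : w ∈ φ.badWords (n + q)) :
    w.take n ∈ φ.badWords n ∧ φ.restrict (w.take n) (w.drop n) = w.drop n := by
  obtain ⟨hlen, hfix, hres⟩ := hw
  rw [← List.take_append_drop n w, toFun_append_eq_self_iff] at hfix
  refine ⟨⟨by rw [List.length_take]; omega, hfix.1, fun hid => hres ?_⟩, hfix.2⟩
  simpa using φ.restrict_append_eq_id hid (w.drop n)

theorem ncard_badWords_take_eq_le [Fintype X] (n : ℕ) {p : ℕ} {a u : List X}
    (hu : u.length = p) (hmoved : φ.restrict a u ≠ u) :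
    {w ∈ φ.badWords (n + p) | w.take n = a}.ncard ≤ Fintype.card X ^ p - 1 := by
  calc {w ∈ φ.badWords (n + p) | w.take n = a}.ncard
      ≤ ({l : List X | l.length = p} \ {u}).ncard := by
        refine Set.ncard_le_ncard_of_injOn (List.drop n) ?_ ?_
          ((List.finite_length_eq X p).sdiff)
        · rintro w ⟨hw, rfl⟩
          have htail := (φ.take_mem_badWords_and_restrict_drop hw).2
          refine ⟨by simp [hw.1], fun hu' => hmoved ?_⟩
          rwa [← Set.mem_singleton_iff.mp hu']
        · rintro w₁ ⟨-, h₁⟩ w₂ ⟨-, h₂⟩ hdrop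
          rw [← List.take_append_drop n w₁, ← List.take_append_drop n w₂, h₁, h₂]
          exact congrArg _ hdrop
    _ = Fintype.card X ^ p - 1 := by
        rw [Set.ncard_sdiff_singleton_of_mem (show u ∈ {l : List X | l.length = p} from hu),
          List.ncard_setOf_length_eq]

theorem ncard_badWords_add_le [Fintype X] {p : ℕ}
    (hmoves : ∀ w : List X, φ.restrict w ≠ id →
      ∃ u : List X, u.length = p ∧ φ.restrict w u ≠ u) (n : ℕ) :
    (φ.badWords (n + p)).ncard ≤ (Fintype.card X ^ p - 1) * (φ.badWords n).ncard := by
  refine Set.ncard_le_mul_ncard_of_mapsTo (φ.badWords_finite _) (φ.badWords_finite _)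
    (fun w hw => (φ.take_mem_badWords_and_restrict_drop hw).1) _ fun a ha => ?_
  obtain ⟨u, hu, hmoved⟩ := hmoves a ha.2.2
  exact φ.ncard_badWords_take_eq_le n hu hmoved

theorem ncard_badWords_zero_le_one [Fintype X] : (φ.badWords 0).ncard ≤ 1 := by
  simpa using Set.ncard_le_ncard (fun w (hw : w ∈ φ.badWords 0) => hw.1)
    (List.finite_length_eq X 0) |>.trans_eq (List.ncard_setOf_length_eq X 0)

end TreeAut

theorem card_badWords_le_general {X : Type*} [Fintype X]
    (φ : TreeAut X) (p : ℕ)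
    (hstate : ∀ w : List X, φ.restrict w ≠ id →
      ∃ u : List X, u.length = p ∧ φ.restrict w u ≠ u) :
    ∀ k : ℕ, (φ.badWords (p * k)).ncard ≤ (Fintype.card X ^ p - 1) ^ k := by
  intro k
  induction k with
  | zero => simpa using φ.ncard_badWords_zero_le_one
  | succ k ih =>
    calc (φ.badWords (p * (k + 1))).ncard
        ≤ (Fintype.card X ^ p - 1) * (φ.badWords (p * k)).ncard :=
          φ.ncard_badWords_add_le hstate (p * k)
      _ ≤ (Fintype.card X ^ p - 1) * (Fintype.card X ^ p - 1) ^ k := Nat.mul_le_mul_left _ ih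
      _ = (Fintype.card X ^ p - 1) ^ (k + 1) := (pow_succ' _ _).symm

/-- Let `X` be finite with `|X| ≥ 2` and `φ` an automorphism of the
rooted tree `X*`.  Suppose `p > 0` is such that for every word `w` with `φ|_w ≠ id`
there is a word `u` of length `p` with `φ|_w(u) ≠ u`.  Then `|P_{pk}| ≤ (|X|^p − 1)^k`
for every `k ≥ 0`. -/
theorem card_badWords_le {X : Type*} [Fintype X] (hX : 2 ≤ Fintype.card X)
    (φ : TreeAut X) (p : ℕ) (hp : 0 < p)
    (hstate : ∀ w : List X, φ.restrict w ≠ id →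
      ∃ u : List X, u.length = p ∧ φ.restrict w u ≠ u) :
    ∀ k : ℕ, (φ.badWords (p * k)).ncard ≤ (Fintype.card X ^ p - 1) ^ k :=
  card_badWords_le_general φ p hstate
end

section
/- Let G be an étale groupoid. Then the set D⁰ of dangerous units equals s(cl(G⁰) \ G⁰), where cl(G⁰) is the closure of the unit space G⁰ in G and s is the source map. Moreover, if G can be covered by countably many open bisections, then D⁰ is a Borel subset of G⁰. -/
/-!
A proper filter converging to a unit `y` and to some `h ≠ y` contains the open set `G⁰`, on
which `s` is the identity; by continuity of `s` it then also converges to `s h`, so `s h = y`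
because `G⁰` is Hausdorff, and `h ∈ cl(G⁰) \ G⁰`. Conversely, for `h ∈ cl(G⁰) \ G⁰` the filter
`𝓝 h ⊓ 𝓟 G⁰` converges to `h` and to `s h`.

For measurability, `s` is an injective open map on each open bisection `U`, so it maps the
closed set `(cl(G⁰) \ G⁰) ∩ U` onto a relatively closed subset of the open set `s(U)`.
-/

open MeasureTheory
open scoped ENNReal

/-- An étale groupoid: a topological groupoid (possibly non-Hausdorff) on the type `G`,
with partially defined multiplication `mul g h` (meaningful when `src g = rng h`),
inversion `inv`, source and range maps `src`, `rng`, and open unit space `unitSpace`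
which is locally compact and Hausdorff; the source and range maps are local
homeomorphisms. -/
structure EtaleGroupoid (G : Type*) [TopologicalSpace G] : Type _ where
  src : G → G
  rng : G → G
  mul : G → G → G
  inv : G → G
  unitSpace : Set G
  src_mem : ∀ g, src g ∈ unitSpace
  rng_mem : ∀ g, rng g ∈ unitSpace
  src_unit : ∀ u ∈ unitSpace, src u = u
  rng_unit : ∀ u ∈ unitSpace, rng u = u
  src_mul : ∀ g h, src g = rng h → src (mul g h) = src h
  rng_mul : ∀ g h, src g = rng h → rng (mul g h) = rng g
  mul_assoc : ∀ g h k, src g = rng h → src h = rng k →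
    mul (mul g h) k = mul g (mul h k)
  src_inv : ∀ g, src (inv g) = rng g
  rng_inv : ∀ g, rng (inv g) = src g
  inv_mul_self : ∀ g, mul (inv g) g = src g
  mul_inv_self : ∀ g, mul g (inv g) = rng g
  mul_src_self : ∀ g, mul g (src g) = g
  rng_mul_self : ∀ g, mul (rng g) g = g
  isOpen_unitSpace : IsOpen unitSpace
  t2_unitSpace : ∀ x ∈ unitSpace, ∀ y ∈ unitSpace, x ≠ y →
    ∃ U V : Set G, IsOpen U ∧ IsOpen V ∧ x ∈ U ∧ y ∈ V ∧ U ∩ V = ∅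
  locallyCompact_unitSpace : ∀ x ∈ unitSpace, ∀ U : Set G, IsOpen U → x ∈ U →
    ∃ K V : Set G, IsCompact K ∧ IsOpen V ∧ x ∈ V ∧ V ⊆ K ∧ K ⊆ U ∩ unitSpace
  continuous_inv : Continuous inv
  continuousOn_mul : ContinuousOn (fun p : G × G => mul p.1 p.2)
    {p : G × G | src p.1 = rng p.2}
  etale_src : ∀ g : G, ∃ U : Set G, IsOpen U ∧ g ∈ U ∧ Set.InjOn src U ∧
    ContinuousOn src U ∧ ∀ V ⊆ U, IsOpen V → IsOpen (src '' V)
  etale_rng : ∀ g : G, ∃ U : Set G, IsOpen U ∧ g ∈ U ∧ Set.InjOn rng U ∧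
    ContinuousOn rng U ∧ ∀ V ⊆ U, IsOpen V → IsOpen (rng '' V)

namespace EtaleGroupoid

variable {G : Type*} [TopologicalSpace G] (E : EtaleGroupoid G)

/-- The isotropy of `G`: arrows with equal source and range. -/
def iso : Set G := {g : G | E.src g = E.rng g}

/-- An (open) bisection: an open set on which both the source and range maps are
injective (hence homeomorphisms onto their images). -/
def IsBisection (U : Set G) : Prop :=
  IsOpen U ∧ Set.InjOn E.src U ∧ Set.InjOn E.rng U

/-- The semifinite part of a measure:
`μ_sf(A) = sup { μ(B) : B ⊆ A Borel, μ(B) < ∞ }`. -/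
noncomputable def sfPart [MeasurableSpace G] (μ : Measure G) (A : Set G) : ℝ≥0∞ :=
  ⨆ (B : Set G) (_ : MeasurableSet B) (_ : B ⊆ A) (_ : μ B ≠ ⊤), μ B

/-- A Radon measure on the unit space `G⁰`: a Borel measure on `G` concentrated on
`G⁰` which is finite on compact subsets of `G⁰`, inner regular on open subsets of `G⁰`
and outer regular on Borel subsets of `G⁰`. -/
def IsRadonOnUnits [MeasurableSpace G] (μ : Measure G) : Prop :=
  μ E.unitSpaceᶜ = 0 ∧
  (∀ K : Set G, K ⊆ E.unitSpace → IsCompact K → μ K ≠ ⊤) ∧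
  (∀ U : Set G, IsOpen U → U ⊆ E.unitSpace →
    μ U = ⨆ (K : Set G) (_ : IsCompact K) (_ : K ⊆ U), μ K) ∧
  (∀ A : Set G, MeasurableSet A → A ⊆ E.unitSpace →
    μ A = ⨅ (U : Set G) (_ : IsOpen U) (_ : A ⊆ U ∧ U ⊆ E.unitSpace), μ U)

/-- `G` is essentially free with respect to `μ`:
`μ_sf(s(U ∩ Iso(G) \ G⁰)) = 0` for every open bisection `U`. -/
def EssentiallyFree [MeasurableSpace G] (μ : Measure G) : Prop :=
  ∀ U : Set G, E.IsBisection U →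
    sfPart μ (E.src '' ((U ∩ E.iso) \ E.unitSpace)) = 0

end EtaleGroupoid

section OpenMap

open Set

variable {X Y : Type*} [TopologicalSpace X] [TopologicalSpace Y] {f : X → Y}

theorem IsOpenMap.image_inter_eq_closure_inter_image (hf : IsOpenMap f) {U C : Set X}
    (hU : IsOpen U) (hinj : InjOn f U) (hC : IsClosed C) :
    f '' (C ∩ U) = closure (f '' (C ∩ U)) ∩ f '' U := by
  refine Subset.antisymm (subset_inter subset_closure (image_mono inter_subset_right)) ?_
  rintro _ ⟨hy, g, hgU, rfl⟩
  refine ⟨g, ⟨hC.closure_subset (mem_closure_iff.2 fun W hW hgW => ?_), hgU⟩, rfl⟩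
  -- `f '' (W ∩ U)` is an open neighbourhood of `f g`, so it meets `f '' (C ∩ U)`;
  -- injectivity on `U` pulls the meeting point back into `W ∩ C`.
  obtain ⟨_, ⟨w, hw, rfl⟩, c, hc, hcw⟩ :=
    mem_closure_iff.1 hy _ (hf _ (hW.inter hU)) ⟨g, ⟨hgW, hgU⟩, rfl⟩
  exact ⟨w, hw.1, hinj hc.2 hw.2 hcw ▸ hc.1⟩

theorem IsOpenMap.measurableSet_image_inter [MeasurableSpace Y] [OpensMeasurableSpace Y]
    (hf : IsOpenMap f) {U C : Set X} (hU : IsOpen U) (hinj : InjOn f U) (hC : IsClosed C) :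
    MeasurableSet (f '' (C ∩ U)) := by
  rw [hf.image_inter_eq_closure_inter_image hU hinj hC]
  exact isClosed_closure.measurableSet.inter (hf U hU).measurableSet

end OpenMap

namespace EtaleGroupoid

variable {G : Type*} [TopologicalSpace G]

/-- The set of dangerous units: units `y` such that some net (equivalently, some proper
filter) converges simultaneously to `y` and to some `h ≠ y`. -/
def dangerousUnits (E : EtaleGroupoid G) : Set G :=
  {y : G | y ∈ E.unitSpace ∧ ∃ h : G, h ≠ y ∧
    ∃ F : Filter G, F.NeBot ∧ F ≤ nhds y ∧ F ≤ nhds h}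

open Filter Topology Set

theorem continuous_src (E : EtaleGroupoid G) : Continuous E.src := by
  refine continuous_iff_continuousAt.2 fun g => ?_
  obtain ⟨U, hU, hgU, -, hcont, -⟩ := E.etale_src g
  exact hcont.continuousAt (hU.mem_nhds hgU)

theorem isOpenMap_src (E : EtaleGroupoid G) : IsOpenMap E.src := by
  refine fun V hV => isOpen_iff_forall_mem_open.2 ?_
  rintro _ ⟨g, hgV, rfl⟩
  obtain ⟨U, hU, hgU, -, -, himage⟩ := E.etale_src g
  exact ⟨E.src '' (V ∩ U), image_mono inter_subset_left,
    himage _ inter_subset_right (hV.inter hU), g, ⟨hgV, hgU⟩, rfl⟩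

theorem le_nhds_src (E : EtaleGroupoid G) {F : Filter G} {g : G} (hF : E.unitSpace ∈ F)
    (hg : F ≤ 𝓝 g) : F ≤ 𝓝 (E.src g) :=
  ((E.continuous_src.tendsto g).mono_left hg).congr' (eventually_of_mem hF E.src_unit)

theorem eq_of_le_nhds_of_mem_unitSpace (E : EtaleGroupoid G) {F : Filter G} [F.NeBot]
    {x y : G} (hx : x ∈ E.unitSpace) (hy : y ∈ E.unitSpace) (hFx : F ≤ 𝓝 x)
    (hFy : F ≤ 𝓝 y) : x = y := by
  by_contra hne
  obtain ⟨U, V, hU, hV, hxU, hyV, hUV⟩ := E.t2_unitSpace x hx y hy hne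
  exact F.empty_notMem (hUV ▸ inter_mem (hFx (hU.mem_nhds hxU)) (hFy (hV.mem_nhds hyV)))

theorem dangerousUnits_eq_src_image (E : EtaleGroupoid G) :
    E.dangerousUnits = E.src '' (closure E.unitSpace \ E.unitSpace) := by
  ext y
  constructor
  · rintro ⟨hy, h, hne, F, hF, hFy, hFh⟩
    have hunits : E.unitSpace ∈ F := hFy (E.isOpen_unitSpace.mem_nhds hy)
    have hsrc : E.src h = y :=
      E.eq_of_le_nhds_of_mem_unitSpace (E.src_mem h) hy (E.le_nhds_src hunits hFh) hFy
    refine ⟨h, ⟨?_, fun hh => hne ?_⟩, hsrc⟩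
    · exact mem_closure_iff_clusterPt.2 (neBot_of_le (le_inf hFh (le_principal_iff.2 hunits)))
    · rw [← hsrc, E.src_unit h hh]
  · rintro ⟨h, ⟨hcl, hnot⟩, rfl⟩
    exact ⟨E.src_mem h, h, fun hh => hnot (hh ▸ E.src_mem h), 𝓝 h ⊓ 𝓟 E.unitSpace,
      mem_closure_iff_clusterPt.1 hcl,
      E.le_nhds_src (mem_inf_of_right (mem_principal_self _)) inf_le_left, inf_le_left⟩

/-- Let `G` be an étale groupoid.  Then the set `D⁰` of dangerous units
equals `s(cl(G⁰) \ G⁰)`; moreover, if `G` can be covered by countably many open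
bisections then `D⁰` is a Borel subset of `G⁰`. -/
theorem dangerousUnits_eq_src_image_closure_diff
    [MeasurableSpace G] [BorelSpace G] (E : EtaleGroupoid G) :
    E.dangerousUnits = E.src '' (closure E.unitSpace \ E.unitSpace) ∧
    ((∃ 𝒰 : ℕ → Set G, (∀ n, E.IsBisection (𝒰 n)) ∧ (⋃ n, 𝒰 n) = Set.univ) →
      MeasurableSet E.dangerousUnits) := by
  refine ⟨E.dangerousUnits_eq_src_image, ?_⟩
  rintro ⟨𝒰, hbis, hcov⟩
  have hclosed : IsClosed (closure E.unitSpace \ E.unitSpace) :=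
    isClosed_closure.sdiff E.isOpen_unitSpace
  rw [E.dangerousUnits_eq_src_image, ← inter_univ (_ \ _), ← hcov, inter_iUnion, image_iUnion]
  exact .iUnion fun n => E.isOpenMap_src.measurableSet_image_inter (hbis n).1 (hbis n).2.1 hclosed

end EtaleGroupoid
end

section
/- Let G be an étale groupoid which can be covered by countably many open bisections, and μ a Radon measure on G⁰. Then G is essentially free with respect to μ if and only if μ_sf({ x ∈ G⁰ : G_x^x ≠ {x} }) = 0. -/
open MeasureTheory
open scoped ENNReal

/-!
The nontrivial isotropy is `src '' (Iso(G) \ G⁰)`. Cutting it along a countable cover by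
bisections `Uₙ` writes it as the union of the sets `src '' (Uₙ ∩ Iso(G) \ G⁰)` controlled by
essential freeness. These pieces are Borel, since `src` is an open injection on `Uₙ` and
`Iso(G) \ G⁰` is closed, and a countable union of Borel sets with null semifinite part
again has null semifinite part.
-/

namespace EtaleGroupoid

section Measure

variable {G : Type*} [MeasurableSpace G] {μ : Measure G}

lemma sfPart_eq_zero_iff {A : Set G} :
    sfPart μ A = 0 ↔
      ∀ B : Set G, MeasurableSet B → B ⊆ A → μ B ≠ ⊤ → μ B = 0 := by
  simp [sfPart, ENNReal.iSup_eq_zero]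

lemma sfPart_mono {A A' : Set G} (h : A ⊆ A') : sfPart μ A ≤ sfPart μ A' :=
  iSup₂_mono fun _ _ => iSup_mono' fun hB => ⟨hB.trans h, le_rfl⟩

lemma sfPart_iUnion_eq_zero {ι : Sort*} [Countable ι] {A : ι → Set G}
    (hA : ∀ i, MeasurableSet (A i)) (h : ∀ i, sfPart μ (A i) = 0) :
    sfPart μ (⋃ i, A i) = 0 := by
  refine sfPart_eq_zero_iff.2 fun B hB hBA hBfin => ?_
  have hpiece : ∀ i, μ (B ∩ A i) = 0 := fun i =>
    sfPart_eq_zero_iff.1 (h i) _ (hB.inter (hA i)) Set.inter_subset_right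
      (measure_ne_top_of_subset Set.inter_subset_left hBfin)
  refine measure_mono_null (fun x hx => ?_) (measure_iUnion_null hpiece)
  obtain ⟨i, hi⟩ := Set.mem_iUnion.1 (hBA hx)
  exact Set.mem_iUnion.2 ⟨i, hx, hi⟩

end Measure

section Topology

variable {G : Type*} [TopologicalSpace G] (E : EtaleGroupoid G)

lemma continuous_src_s13 : Continuous E.src :=
  continuous_iff_continuousAt.2 fun g =>
    let ⟨_, hUo, hgU, _, hc, _⟩ := E.etale_src g
    hc.continuousAt (hUo.mem_nhds hgU)

lemma continuous_rng : Continuous E.rng :=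
  continuous_iff_continuousAt.2 fun g =>
    let ⟨_, hUo, hgU, _, hc, _⟩ := E.etale_rng g
    hc.continuousAt (hUo.mem_nhds hgU)

lemma isOpenMap_src_s13 : IsOpenMap E.src := by
  intro W hW
  rw [isOpen_iff_forall_mem_open]
  rintro _ ⟨g, hgW, rfl⟩
  obtain ⟨U, hUo, hgU, _, _, hopen⟩ := E.etale_src g
  exact ⟨E.src '' (W ∩ U), Set.image_mono Set.inter_subset_left,
    hopen _ Set.inter_subset_right (hW.inter hUo), g, ⟨hgW, hgU⟩, rfl⟩

instance t2Space_unitSpace : T2Space E.unitSpace where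
  t2 x y hxy := by
    obtain ⟨U, V, hU, hV, hxU, hyV, hUV⟩ :=
      E.t2_unitSpace x x.2 y y.2 (Subtype.coe_ne_coe.2 hxy)
    exact ⟨_, _, hU.preimage continuous_subtype_val, hV.preimage continuous_subtype_val,
      hxU, hyV, (Set.disjoint_iff_inter_eq_empty.2 hUV).preimage _⟩

/-- Although `G` need not be Hausdorff, both `src` and `rng` land in the Hausdorff
space `G⁰`, so their equalizer is closed. -/
lemma isClosed_iso : IsClosed E.iso := by
  have h : E.iso =
      {g | (⟨E.src g, E.src_mem g⟩ : E.unitSpace) = ⟨E.rng g, E.rng_mem g⟩} := by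
    ext g; simp [iso, Subtype.ext_iff]
  rw [h]
  exact isClosed_eq (E.continuous_src_s13.subtype_mk _) (E.continuous_rng.subtype_mk _)

lemma isClosed_iso_diff_unitSpace : IsClosed (E.iso \ E.unitSpace) :=
  E.isClosed_iso.sdiff E.isOpen_unitSpace

/-- On a bisection `U`, `src '' (U ∩ C) = src '' U \ src '' (U \ C)` is a difference of
open sets. -/
lemma measurableSet_src_image_inter [MeasurableSpace G] [OpensMeasurableSpace G]
    {U C : Set G} (hU : E.IsBisection U) (hC : IsClosed C) :
    MeasurableSet (E.src '' (U ∩ C)) := by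
  rw [← Set.sdiff_compl, hU.2.1.image_sdiff]
  exact (E.isOpenMap_src_s13 U hU.1).measurableSet.diff
    (E.isOpenMap_src_s13 _ (hU.1.inter hC.isOpen_compl)).measurableSet

lemma setOf_nontrivialIsotropy_eq_src_image :
    {x : G | x ∈ E.unitSpace ∧ ∃ g : G, g ≠ x ∧ E.src g = x ∧ E.rng g = x}
      = E.src '' (E.iso \ E.unitSpace) := by
  ext x
  constructor
  · rintro ⟨-, g, hgx, hs, hr⟩
    refine ⟨g, ⟨hs.trans hr.symm, fun hg => hgx ?_⟩, hs⟩
    rw [← E.src_unit g hg, hs]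
  · rintro ⟨g, ⟨hgiso, hgunit⟩, rfl⟩
    exact ⟨E.src_mem g, g, fun h => hgunit (h ▸ E.src_mem g), rfl, hgiso.symm⟩

end Topology

variable {G : Type*} [TopologicalSpace G]

theorem essentiallyFree_iff_sfPart_nontrivialIsotropy_eq_zero_general
    [MeasurableSpace G] [BorelSpace G] (E : EtaleGroupoid G)
    (μ : MeasureTheory.Measure G)
    (hcount : ∃ 𝒰 : ℕ → Set G, (∀ n, E.IsBisection (𝒰 n)) ∧ (⋃ n, 𝒰 n) = Set.univ) :
    E.EssentiallyFree μ ↔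
      sfPart μ {x : G | x ∈ E.unitSpace ∧
        ∃ g : G, g ≠ x ∧ E.src g = x ∧ E.rng g = x} = 0 := by
  obtain ⟨𝒰, h𝒰, hcover⟩ := hcount
  simp only [EssentiallyFree, Set.inter_sdiff_assoc, setOf_nontrivialIsotropy_eq_src_image]
  constructor
  · intro hfree
    have hunion : E.iso \ E.unitSpace = ⋃ n, 𝒰 n ∩ (E.iso \ E.unitSpace) := by
      rw [← Set.iUnion_inter, hcover, Set.univ_inter]
    rw [hunion, Set.image_iUnion]
    exact sfPart_iUnion_eq_zero
      (fun n => E.measurableSet_src_image_inter (h𝒰 n) E.isClosed_iso_diff_unitSpace)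
      (fun n => hfree _ (h𝒰 n))
  · intro hzero U _
    exact nonpos_iff_eq_zero.1 <|
      hzero ▸ sfPart_mono (Set.image_mono Set.inter_subset_right)

/-- Let `G` be an étale groupoid which can be covered by countably
many open bisections, and `μ` a Radon measure on `G⁰`.  Then `G` is essentially free
with respect to `μ` if and only if `μ_sf({x ∈ G⁰ : G_x^x ≠ {x}}) = 0`. -/
theorem essentiallyFree_iff_sfPart_nontrivialIsotropy_eq_zero
    [MeasurableSpace G] [BorelSpace G] (E : EtaleGroupoid G)
    (μ : MeasureTheory.Measure G) (hμ : E.IsRadonOnUnits μ)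
    (hcount : ∃ 𝒰 : ℕ → Set G, (∀ n, E.IsBisection (𝒰 n)) ∧ (⋃ n, 𝒰 n) = Set.univ) :
    E.EssentiallyFree μ ↔
      sfPart μ {x : G | x ∈ E.unitSpace ∧
        ∃ g : G, g ≠ x ∧ E.src g = x ∧ E.rng g = x} = 0 :=
  essentiallyFree_iff_sfPart_nontrivialIsotropy_eq_zero_general E μ hcount

end EtaleGroupoid
end

section
/- Let G be an étale groupoid whose unit space G⁰ carries a Radon measure μ of full support, and suppose G is essentially free with respect to μ. Then G is topologically free, i.e., the interior of Iso(G) \ G⁰ is empty. -/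
open MeasureTheory
open scoped ENNReal

namespace EtaleGroupoid

variable {G : Type*} [TopologicalSpace G]

/-- Let `G` be an étale groupoid whose unit space carries a Radon
measure `μ` of full support, and suppose `G` is essentially free with respect to `μ`.
Then `G` is topologically free: the interior of `Iso(G) \ G⁰` is empty. -/
theorem topologicallyFree_of_essentiallyFree_fullSupport
    [MeasurableSpace G] [BorelSpace G] (E : EtaleGroupoid G)
    (μ : MeasureTheory.Measure G) (hμ : E.IsRadonOnUnits μ)
    (hfull : ∀ V : Set G, IsOpen V → V ⊆ E.unitSpace → V.Nonempty → μ V ≠ 0)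
    (hfree : E.EssentiallyFree μ) :
    interior (E.iso \ E.unitSpace) = ∅ := by
  by_contra hne
  obtain ⟨g, hg⟩ := Set.nonempty_iff_ne_empty.2 hne
  obtain ⟨U₁, hU₁o, hgU₁, hinj₁, _, himg₁⟩ := E.etale_src g
  obtain ⟨U₂, hU₂o, hgU₂, hinj₂, _, _⟩ := E.etale_rng g
  set U : Set G := U₁ ∩ U₂ ∩ interior (E.iso \ E.unitSpace) with hU
  have hUo : IsOpen U := ((hU₁o.inter hU₂o).inter isOpen_interior)
  have hgU : g ∈ U := ⟨⟨hgU₁, hgU₂⟩, hg⟩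
  have hUsub : U ⊆ E.iso \ E.unitSpace := fun x hx =>
    interior_subset hx.2
  have hbis : E.IsBisection U :=
    ⟨hUo, hinj₁.mono (fun x hx => hx.1.1), hinj₂.mono (fun x hx => hx.1.2)⟩
  have hset : (U ∩ E.iso) \ E.unitSpace = U := by
    apply Set.Subset.antisymm
    · intro x hx; exact hx.1.1
    · intro x hx; exact ⟨⟨hx, (hUsub hx).1⟩, (hUsub hx).2⟩
  have himg_open : IsOpen (E.src '' U) :=
    himg₁ U (fun x hx => hx.1.1) hUo
  have himg_sub : E.src '' U ⊆ E.unitSpace := by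
    rintro _ ⟨x, _, rfl⟩; exact E.src_mem x
  have hsg : E.src g ∈ E.src '' U := ⟨g, hgU, rfl⟩
  obtain ⟨K, V, hKc, hVo, hxV, hVK, hKsub⟩ :=
    E.locallyCompact_unitSpace (E.src g) (E.src_mem g) (E.src '' U) himg_open hsg
  have hVsub : V ⊆ E.src '' U := fun x hx => (hKsub (hVK hx)).1
  have hVfin : μ V ≠ ⊤ := fun h =>
    (hμ.2.1 K (fun x hx => (hKsub hx).2) hKc) (top_le_iff.1 (h ▸ measure_mono hVK))
  have hVpos : μ V ≠ 0 :=
    hfull V hVo (fun x hx => (hKsub (hVK hx)).2) ⟨E.src g, hxV⟩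
  have hle : μ V ≤ sfPart μ (E.src '' ((U ∩ E.iso) \ E.unitSpace)) := by
    rw [hset]
    have := le_iSup (fun B : Set G =>
      ⨆ (_ : MeasurableSet B) (_ : B ⊆ E.src '' U) (_ : μ B ≠ ⊤), μ B) V
    rw [iSup_pos hVo.measurableSet, iSup_pos hVsub, iSup_pos hVfin] at this
    exact this
  rw [hfree U hbis] at hle
  exact hVpos (le_antisymm hle bot_le)

end EtaleGroupoid
end

section
/- Let G be an étale groupoid, x ∈ G⁰, and H ≤ G_x^x a subgroup. Then the formula L(a)(δ_{gH}) = Σ_{k ∈ G_{r(g)}} a(k) δ_{kgH}, for a in the convolution algebra C_c(G) and g ∈ G_x, defines a *-representation L of C_c(G) on ℓ²(G_x/H); in particular, for all a, b ∈ C_c(G): L(a*) = L(a)* and L(ab) = L(a)L(b). -/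
/-!
The matrix of `L(a)` in the basis `δ_{gH}` is `K_a(ξ, η) = ∑_{h ∈ H} a(u h v⁻¹)`, where
`u, v ∈ G_x` represent `ξ, η`. For `a ∈ 𝒞_c(G)` the sums of `|a|` over the fibres of `s` and of
`r` are uniformly bounded (a compact set meets every fibre of a local homeomorphism in a bounded
number of points), and `(η, h) ↦ u h v⁻¹`, with `v` representing `η`, injects `G_x/H × H` into
the fibre `r⁻¹(r(u))`; so the rows and columns of `K_a` are uniformly summable and the Schur test
makes `L(a)` bounded on `ℓ²(G_x/H)`. The relations `K_{a*}(ξ, η) = conj K_a(η, ξ)` and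
`K_{ab} = K_a K_b` are reindexings of absolutely convergent sums: every factorisation
`p q = u h v⁻¹` is `p = u h' w⁻¹`, `q = w h'' v⁻¹` for a unique coset `ζ = wH` and `h', h'' ∈ H`
with `h' h'' = h`.
-/

open MeasureTheory
open scoped ENNReal

namespace EtaleGroupoid

variable (G : Type*) [TopologicalSpace G]

/-- The generating set of the convolution algebra `𝒞_c(G)`: functions which are
continuous on some open Hausdorff subset `U ⊆ G`, vanish outside a compact subset of
`U`, and vanish outside `U`. -/
def CcGen : Set (G → ℂ) :=
  {f : G → ℂ | ∃ U : Set G, IsOpen U ∧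
    (∀ x ∈ U, ∀ y ∈ U, x ≠ y →
      ∃ V W : Set G, IsOpen V ∧ IsOpen W ∧ x ∈ V ∧ y ∈ W ∧ V ∩ W = ∅) ∧
    ContinuousOn f U ∧
    ∃ K : Set G, K ⊆ U ∧ IsCompact K ∧ ∀ g ∉ K, f g = 0}

/-- The convolution algebra `𝒞_c(G)`: the linear span of the compactly supported
functions which are continuous on an open Hausdorff subset. -/
noncomputable def Cc : Submodule ℂ (G → ℂ) :=
  Submodule.span ℂ (CcGen G)

variable {G} (E : EtaleGroupoid G)

/-- The convolution product `(a * b)(g) = ∑_{g₁ g₂ = g} a(g₁) b(g₂)`. -/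
noncomputable def convolution (a b : G → ℂ) : G → ℂ :=
  fun g => ∑' p : {p : G × G // E.src p.1 = E.rng p.2 ∧ E.mul p.1 p.2 = g},
    a p.1.1 * b p.1.2

/-- The involution `a*(g) = conj (a (g⁻¹))`. -/
def starFun (a : G → ℂ) : G → ℂ :=
  fun g => star (a (E.inv g))

end EtaleGroupoid

namespace EtaleGroupoid

variable {G : Type*} [TopologicalSpace G] (E : EtaleGroupoid G)

/-- The source fibre `G_x = s⁻¹(x)`. -/
def srcFiber (x : G) : Type _ := {g : G // E.src g = x}

/-- The right-coset relation on `G_x` determined by a subgroup `H ≤ G_x^x`: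
`g ∼ g'` iff `g h = g'` for some `h ∈ H`. -/
def cosetRel (x : G) (H : Set G) (g g' : E.srcFiber x) : Prop :=
  ∃ h ∈ H, E.mul g.1 h = g'.1

/-- The coset space `G_x / H`. -/
def CosetSpace (x : G) (H : Set G) : Type _ := Quot (E.cosetRel x H)

noncomputable instance (x : G) (H : Set G) : DecidableEq (E.CosetSpace x H) :=
  Classical.decEq _

/-- The Hilbert space `ℓ²(G_x/H)`. -/
noncomputable abbrev L2 (x : G) (H : Set G) := lp (fun _ : E.CosetSpace x H => ℂ) 2

/-- The basis vector `δ_{gH} ∈ ℓ²(G_x/H)`. -/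
noncomputable def delta (x : G) (H : Set G) (g : G) (hg : E.src g = x) :
    E.L2 x H :=
  lp.single 2 (Quot.mk _ (⟨g, hg⟩ : E.srcFiber x)) (1 : ℂ)

end EtaleGroupoid

open scoped NNReal lp

namespace ENNReal

lemma two_mul_mul_le_sq_add_sq (a b : ℝ≥0∞) : 2 * a * b ≤ a ^ 2 + b ^ 2 := by
  rcases eq_or_ne a ∞ with rfl | ha
  · simp
  rcases eq_or_ne b ∞ with rfl | hb
  · simp
  lift a to ℝ≥0 using ha
  lift b to ℝ≥0 using hb
  exact_mod_cast two_mul_le_add_sq a b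

lemma sq_tsum_mul_le {ι : Type*} (f g : ι → ℝ≥0∞) :
    (∑' i, f i * g i) ^ 2 ≤ (∑' i, f i) * ∑' i, f i * g i ^ 2 := by
  have tsum_mul_tsum (u v : ι → ℝ≥0∞) : (∑' i, u i) * ∑' j, v j = ∑' i, ∑' j, u i * v j := by
    simp_rw [← ENNReal.tsum_mul_right, ← ENNReal.tsum_mul_left]
  rw [← ENNReal.mul_le_mul_iff_right two_ne_zero ofNat_ne_top]
  calc 2 * (∑' i, f i * g i) ^ 2
      = ∑' i, ∑' j, f i * f j * (2 * g i * g j) := by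
        rw [sq, tsum_mul_tsum, ← ENNReal.tsum_mul_left]
        refine tsum_congr fun i => ?_
        rw [← ENNReal.tsum_mul_left]
        exact tsum_congr fun j => by ring
    _ ≤ ∑' i, ∑' j, f i * f j * (g i ^ 2 + g j ^ 2) := by
        gcongr with i j
        exact two_mul_mul_le_sq_add_sq _ _
    _ = ∑' i, ∑' j, f i * g i ^ 2 * f j + ∑' i, ∑' j, f i * (f j * g j ^ 2) := by
        rw [← ENNReal.tsum_add]
        refine tsum_congr fun i => ?_
        rw [← ENNReal.tsum_add]
        exact tsum_congr fun j => by ring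
    _ = 2 * ((∑' i, f i) * ∑' i, f i * g i ^ 2) := by
        rw [← tsum_mul_tsum, ← tsum_mul_tsum, mul_comm, two_mul]

end ENNReal

section SchurTest

variable {ι 𝕜 : Type*} [RCLike 𝕜]

lemma memℓp_two_iff_tsum_enorm_sq_ne_top {f : ι → 𝕜} :
    Memℓp f 2 ↔ ∑' i, ‖f i‖ₑ ^ 2 ≠ ∞ := by
  rw [memℓp_gen_iff (by norm_num)]
  simp_rw [← enorm_pow, tsum_enorm_ne_top_iff_summable_norm, norm_pow, ENNReal.toReal_ofNat,
    Real.rpow_two]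

lemma lp.tsum_enorm_sq (ψ : ℓ²(ι, 𝕜)) : ∑' i, ‖ψ i‖ₑ ^ 2 = ‖ψ‖ₑ ^ 2 := by
  have h := lp.norm_rpow_eq_tsum (p := 2) (by norm_num) ψ
  simp only [ENNReal.toReal_ofNat, Real.rpow_two] at h
  rw [← ofReal_norm, ← ENNReal.ofReal_pow (norm_nonneg _), h,
    ENNReal.ofReal_tsum_of_nonneg (fun _ => by positivity)
      ((lp.memℓp ψ).summable (p := 2) (by norm_num) |>.congr fun i => by simp)]
  simp_rw [ENNReal.ofReal_pow (norm_nonneg _), ofReal_norm]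

lemma lp.enorm_apply_le (ψ : ℓ²(ι, 𝕜)) (i : ι) : ‖ψ i‖ₑ ≤ ‖ψ‖ₑ := by
  simpa only [← ofReal_norm] using ENNReal.ofReal_le_ofReal (lp.norm_apply_le_norm two_ne_zero ψ i)

lemma lp.inner_single_one_left [DecidableEq ι] (i : ι) (ψ : ℓ²(ι, 𝕜)) :
    inner 𝕜 (lp.single 2 i (1 : 𝕜)) ψ = ψ i := by
  simp [lp.inner_single_left]

lemma lp.ext_single_one [DecidableEq ι] {A B : ℓ²(ι, 𝕜) →L[𝕜] ℓ²(ι, 𝕜)}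
    (h : ∀ j, A (lp.single 2 j 1) = B (lp.single 2 j 1)) : A = B :=
  lp.ext_continuousLinearMap ENNReal.ofNat_ne_top fun j => ContinuousLinearMap.ext_ring (h j)

/-- The hypothesis of the Schur test. -/
def SchurBounded (M : ι → ι → 𝕜) : Prop :=
  ∃ C : ℝ≥0, (∀ i, ∑' j, ‖M i j‖ₑ ≤ C) ∧ ∀ j, ∑' i, ‖M i j‖ₑ ≤ C

variable {M : ι → ι → 𝕜} {C : ℝ≥0}

lemma tsum_enorm_row_mul_le (hrow : ∀ i, ∑' j, ‖M i j‖ₑ ≤ C) (ψ : ℓ²(ι, 𝕜)) (i : ι) :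
    ∑' j, ‖M i j * ψ j‖ₑ ≤ C * ‖ψ‖ₑ :=
  calc ∑' j, ‖M i j * ψ j‖ₑ ≤ ∑' j, ‖M i j‖ₑ * ‖ψ‖ₑ := by
        simp_rw [enorm_mul]
        gcongr with j
        exact lp.enorm_apply_le ψ j
    _ ≤ C * ‖ψ‖ₑ := by
        rw [ENNReal.tsum_mul_right]
        gcongr
        exact hrow i

lemma summable_mul_of_row_le (hrow : ∀ i, ∑' j, ‖M i j‖ₑ ≤ C) (ψ : ℓ²(ι, 𝕜)) (i : ι) :
    Summable fun j => M i j * ψ j :=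
  Summable.of_enorm <| ne_top_of_le_ne_top (by finiteness) (tsum_enorm_row_mul_le hrow ψ i)

lemma tsum_enorm_sq_matVec_le (hrow : ∀ i, ∑' j, ‖M i j‖ₑ ≤ C)
    (hcol : ∀ j, ∑' i, ‖M i j‖ₑ ≤ C) (ψ : ℓ²(ι, 𝕜)) :
    ∑' i, ‖∑' j, M i j * ψ j‖ₑ ^ 2 ≤ (C * ‖ψ‖ₑ) ^ 2 :=
  calc ∑' i, ‖∑' j, M i j * ψ j‖ₑ ^ 2
      ≤ ∑' i, (∑' j, ‖M i j‖ₑ * ‖ψ j‖ₑ) ^ 2 := by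
        gcongr with i
        simpa only [enorm_mul] using enorm_tsum_le_tsum_enorm (f := fun j => M i j * ψ j)
    _ ≤ ∑' i, C * ∑' j, ‖M i j‖ₑ * ‖ψ j‖ₑ ^ 2 := by
        gcongr with i
        exact (ENNReal.sq_tsum_mul_le _ _).trans (by gcongr; exact hrow i)
    _ = C * ∑' j, (∑' i, ‖M i j‖ₑ) * ‖ψ j‖ₑ ^ 2 := by
        rw [ENNReal.tsum_mul_left, ENNReal.tsum_comm]
        simp_rw [ENNReal.tsum_mul_right]
    _ ≤ C * ∑' j, C * ‖ψ j‖ₑ ^ 2 := by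
        gcongr with j
        exact hcol j
    _ = (C * ‖ψ‖ₑ) ^ 2 := by
        rw [ENNReal.tsum_mul_left, lp.tsum_enorm_sq]
        ring

namespace SchurBounded

lemma memℓp_matVec (hM : SchurBounded M) (ψ : ℓ²(ι, 𝕜)) :
    Memℓp (fun i => ∑' j, M i j * ψ j) 2 := by
  obtain ⟨C, hrow, hcol⟩ := hM
  exact memℓp_two_iff_tsum_enorm_sq_ne_top.2 <|
    ne_top_of_le_ne_top (by finiteness) (tsum_enorm_sq_matVec_le hrow hcol ψ)

noncomputable def matVec (hM : SchurBounded M) (ψ : ℓ²(ι, 𝕜)) : ℓ²(ι, 𝕜) :=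
  ⟨fun i => ∑' j, M i j * ψ j, hM.memℓp_matVec ψ⟩

lemma matVec_apply (hM : SchurBounded M) (ψ : ℓ²(ι, 𝕜)) (i : ι) :
    hM.matVec ψ i = ∑' j, M i j * ψ j :=
  rfl

lemma norm_matVec_le (hM : SchurBounded M) (hrow : ∀ i, ∑' j, ‖M i j‖ₑ ≤ C)
    (hcol : ∀ j, ∑' i, ‖M i j‖ₑ ≤ C) (ψ : ℓ²(ι, 𝕜)) :
    ‖hM.matVec ψ‖ ≤ C * ‖ψ‖ := by
  have h := (lp.tsum_enorm_sq (hM.matVec ψ)).symm.trans_le (tsum_enorm_sq_matVec_le hrow hcol ψ)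
  rw [ENNReal.pow_le_pow_left_iff two_ne_zero, enorm_eq_nnnorm, enorm_eq_nnnorm,
    ← ENNReal.coe_mul, ENNReal.coe_le_coe] at h
  exact_mod_cast h

end SchurBounded

noncomputable def schurOp (M : ι → ι → 𝕜) (hM : SchurBounded M) :
    ℓ²(ι, 𝕜) →L[𝕜] ℓ²(ι, 𝕜) :=
  LinearMap.mkContinuous
    { toFun := hM.matVec
      map_add' := fun ψ φ => lp.ext <| funext fun i => by
        simp only [lp.coeFn_add, Pi.add_apply, SchurBounded.matVec_apply, mul_add]
        exact (summable_mul_of_row_le hM.choose_spec.1 ψ i).tsum_add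
          (summable_mul_of_row_le hM.choose_spec.1 φ i)
      map_smul' := fun c ψ => lp.ext <| funext fun i => by
        simp only [lp.coeFn_smul, Pi.smul_apply, SchurBounded.matVec_apply, smul_eq_mul,
          RingHom.id_apply, mul_left_comm (M i _)]
        exact tsum_mul_left }
    hM.choose (hM.norm_matVec_le hM.choose_spec.1 hM.choose_spec.2)

lemma schurOp_apply (hM : SchurBounded M) (ψ : ℓ²(ι, 𝕜)) (i : ι) :
    schurOp M hM ψ i = ∑' j, M i j * ψ j :=
  rfl

lemma schurOp_single_one_apply [DecidableEq ι] (hM : SchurBounded M) (i j : ι) :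
    schurOp M hM (lp.single 2 j 1) i = M i j := by
  rw [schurOp_apply, tsum_eq_single j fun k hk => by simp [hk]]
  simp

lemma eq_schurOp_of_single_one_apply [DecidableEq ι] {A : ℓ²(ι, 𝕜) →L[𝕜] ℓ²(ι, 𝕜)}
    (hM : SchurBounded M) (h : ∀ i j, A (lp.single 2 j 1) i = M i j) : A = schurOp M hM :=
  lp.ext_single_one fun j => lp.ext <| funext fun i => by rw [h, schurOp_single_one_apply]

lemma schurOp_eq_add {N P : ι → ι → 𝕜} (hM : SchurBounded M) (hN : SchurBounded N)
    (hP : SchurBounded P) (h : ∀ i j, P i j = M i j + N i j) :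
    schurOp P hP = schurOp M hM + schurOp N hN := by
  classical
  refine (eq_schurOp_of_single_one_apply hP fun i j => ?_).symm
  simp [schurOp_single_one_apply, h]

lemma schurOp_eq_smul {N : ι → ι → 𝕜} (c : 𝕜) (hM : SchurBounded M) (hN : SchurBounded N)
    (h : ∀ i j, N i j = c * M i j) : schurOp N hN = c • schurOp M hM := by
  classical
  refine (eq_schurOp_of_single_one_apply hN fun i j => ?_).symm
  simp [schurOp_single_one_apply, h]

lemma schurOp_eq_adjoint {N : ι → ι → 𝕜} (hM : SchurBounded M) (hN : SchurBounded N)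
    (h : ∀ i j, N i j = star (M j i)) : schurOp N hN = (schurOp M hM).adjoint := by
  classical
  refine (eq_schurOp_of_single_one_apply hN fun i j => ?_).symm
  rw [← lp.inner_single_one_left, ContinuousLinearMap.adjoint_inner_right, ← inner_conj_symm,
    lp.inner_single_one_left, schurOp_single_one_apply, h, RCLike.star_def]

lemma schurOp_eq_comp {N P : ι → ι → 𝕜} (hM : SchurBounded M) (hN : SchurBounded N)
    (hP : SchurBounded P) (h : ∀ i j, P i j = ∑' k, M i k * N k j) :
    schurOp P hP = schurOp M hM ∘L schurOp N hN := by
  classical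
  refine (eq_schurOp_of_single_one_apply hP fun i j => ?_).symm
  simp only [ContinuousLinearMap.comp_apply, schurOp_apply _ (schurOp N hN _),
    schurOp_single_one_apply, h]

end SchurTest

section FiberBounded

open Filter Topology

variable {α β : Type*}

def fiberBounded (σ : α → β) : Submodule ℂ (α → ℂ) where
  carrier := {a | ∃ C : ℝ≥0, ∀ b, ∑' k : {k // σ k = b}, ‖a k‖ₑ ≤ C}
  add_mem' := by
    rintro a a' ⟨C, hC⟩ ⟨C', hC'⟩
    refine ⟨C + C', fun b => ?_⟩
    calc ∑' k : {k // σ k = b}, ‖(a + a') k‖ₑ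
        ≤ ∑' k : {k // σ k = b}, (‖a k‖ₑ + ‖a' k‖ₑ) :=
          ENNReal.tsum_le_tsum fun k => enorm_add_le _ _
      _ ≤ C + C' := by
        rw [ENNReal.tsum_add]
        exact add_le_add (hC b) (hC' b)
  zero_mem' := ⟨0, by simp⟩
  smul_mem' := by
    rintro c a ⟨C, hC⟩
    refine ⟨‖c‖₊ * C, fun b => ?_⟩
    simp_rw [Pi.smul_apply, enorm_smul, ENNReal.tsum_mul_left, ENNReal.coe_mul]
    exact mul_le_mul_right (hC b) _

lemma tsum_indicator_fiber_le {σ : α → β} {U : Set α} (hU : Set.InjOn σ U) (c : ℝ≥0∞) (b : β) :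
    ∑' k : {k // σ k = b}, U.indicator (fun _ => c) k ≤ c := by
  by_cases hex : ∃ k : {k // σ k = b}, k.1 ∈ U
  · obtain ⟨k₀, hk₀⟩ := hex
    rw [tsum_eq_single k₀ fun k hk => Set.indicator_of_notMem (fun hkU => hk <| Subtype.ext <|
      hU hkU hk₀ (k.2.trans k₀.2.symm)) _]
    exact Set.indicator_apply_le' (fun _ => le_rfl) (fun _ => zero_le)
  · push Not at hex
    simp [Set.indicator_of_notMem (hex _)]

lemma mem_fiberBounded_of_isCompact [TopologicalSpace α] {σ : α → β} {a : α → ℂ} {K : Set α}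
    (hK : IsCompact K) (hσ : ∀ g ∈ K, ∃ U ∈ 𝓝 g, Set.InjOn σ U) (ha : ∀ g ∉ K, a g = 0)
    {B : ℝ} (hB : ∀ g ∈ K, ‖a g‖ ≤ B) : a ∈ fiberBounded σ := by
  classical
  choose! U hU hinj using hσ
  obtain ⟨t, htK, hcover⟩ := hK.elim_nhds_subcover U hU
  refine ⟨t.card * B.toNNReal, fun b => ?_⟩
  have hpt (k : {k // σ k = b}) :
      ‖a k‖ₑ ≤ ∑ i ∈ t, (U i).indicator (fun _ => ENNReal.ofReal B) k := by
    by_cases hk : k.1 ∈ K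
    · obtain ⟨i, hi, hki⟩ := Set.mem_iUnion₂.1 (hcover hk)
      refine le_trans ?_ (Finset.single_le_sum (f := fun i => (U i).indicator _ k.1)
        (fun _ _ => zero_le) hi)
      rw [Set.indicator_of_mem hki, ← ofReal_norm]
      exact ENNReal.ofReal_le_ofReal (hB k hk)
    · simp [ha k.1 hk]
  calc ∑' k : {k // σ k = b}, ‖a k‖ₑ
      ≤ ∑' k : {k // σ k = b}, ∑ i ∈ t, (U i).indicator (fun _ => ENNReal.ofReal B) k :=
        ENNReal.tsum_le_tsum hpt
    _ = ∑ i ∈ t, ∑' k : {k // σ k = b}, (U i).indicator (fun _ => ENNReal.ofReal B) k :=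
        Summable.tsum_finsetSum fun _ _ => ENNReal.summable
    _ ≤ ∑ i ∈ t, ENNReal.ofReal B :=
        Finset.sum_le_sum fun i hi => tsum_indicator_fiber_le (hinj i (htK i hi)) _ b
    _ = t.card * B.toNNReal := by simp [ENNReal.ofReal]

end FiberBounded

namespace EtaleGroupoid

variable {G : Type*} [TopologicalSpace G] (E : EtaleGroupoid G)

lemma mul_eq_self_of_src_eq {g u : G} (h : E.src g = u) : E.mul g u = g := by
  rw [← h, E.mul_src_self]

lemma mul_eq_self_of_rng_eq {g u : G} (h : E.rng g = u) : E.mul u g = g := by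
  rw [← h, E.rng_mul_self]

lemma mul_mul_inv_cancel {a g : G} (h : E.src a = E.rng g) :
    E.mul (E.mul a g) (E.inv g) = a := by
  rw [E.mul_assoc a g _ h (E.rng_inv g).symm, E.mul_inv_self, ← h, E.mul_src_self]

lemma inv_mul_mul_cancel {g a : G} (h : E.src g = E.rng a) :
    E.mul (E.inv g) (E.mul g a) = a := by
  rw [← E.mul_assoc _ g a (E.src_inv g) h, E.inv_mul_self, h, E.rng_mul_self]

lemma inv_involutive : Function.Involutive E.inv := fun g => by
  have h := E.inv_mul_mul_cancel (g := E.inv g) (a := g) (by rw [E.src_inv])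
  rwa [E.inv_mul_self, E.mul_eq_self_of_src_eq (by rw [E.src_inv, E.rng_inv])] at h

lemma mul_left_cancel {g a b : G} (ha : E.src g = E.rng a) (hb : E.src g = E.rng b)
    (h : E.mul g a = E.mul g b) : a = b := by
  rw [← E.inv_mul_mul_cancel ha, h, E.inv_mul_mul_cancel hb]

lemma inv_mul_rev {p q : G} (h : E.src p = E.rng q) :
    E.inv (E.mul p q) = E.mul (E.inv q) (E.inv p) := by
  have hqp : E.src (E.mul p q) = E.rng (E.mul (E.inv q) (E.inv p)) := by
    rw [E.src_mul p q h, E.rng_mul _ _ (by rw [E.src_inv, E.rng_inv, h]), E.rng_inv]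
  refine E.mul_left_cancel (g := E.mul p q) (by rw [E.rng_inv]) hqp ?_
  rw [E.mul_inv_self, ← E.mul_assoc _ _ _ (by rw [E.src_mul p q h, E.rng_inv])
    (by rw [E.src_inv, E.rng_inv, h]), E.mul_mul_inv_cancel h, E.mul_inv_self, E.rng_mul p q h]

open Topology in
lemma Cc_le_fiberBounded {β : Type*} {σ : G → β} (hσ : ∀ g, ∃ U ∈ 𝓝 g, Set.InjOn σ U) :
    Cc G ≤ fiberBounded σ :=
  Submodule.span_le.2 fun _ ⟨_, _, _, hfc, _, hKU, hK, hf⟩ =>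
    have ⟨_, hB⟩ := hK.exists_bound_of_continuousOn (hfc.mono hKU)
    mem_fiberBounded_of_isCompact hK (fun g _ => hσ g) hf hB

lemma Cc_le_fiberBounded_src_inf_rng : Cc G ≤ fiberBounded E.src ⊓ fiberBounded E.rng :=
  le_inf
    (Cc_le_fiberBounded fun g =>
      have ⟨U, hU, hg, hinj, _⟩ := E.etale_src g
      ⟨U, hU.mem_nhds hg, hinj⟩)
    (Cc_le_fiberBounded fun g =>
      have ⟨U, hU, hg, hinj, _⟩ := E.etale_rng g
      ⟨U, hU.mem_nhds hg, hinj⟩)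

attribute [local simp] src_inv rng_inv

structure IsIsotropySubgroup (x : G) (H : Set G) : Prop where
  one_mem : x ∈ H
  src_rng_eq : ∀ h ∈ H, E.src h = x ∧ E.rng h = x
  mul_mem : ∀ h ∈ H, ∀ h' ∈ H, E.mul h h' ∈ H
  inv_mem : ∀ h ∈ H, E.inv h ∈ H

def cosetArrow (u h v : G) : G :=
  E.mul (E.mul u h) (E.inv v)

noncomputable def cosetRep {x : G} {H : Set G} (ξ : E.CosetSpace x H) : G := (Quot.out ξ).1

lemma src_cosetRep {x : G} {H : Set G} (ξ : E.CosetSpace x H) : E.src (E.cosetRep ξ) = x :=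
  (Quot.out ξ).2

noncomputable def cosetKernel {x : G} {H : Set G} (a : G → ℂ) (ξ η : E.CosetSpace x H) : ℂ :=
  ∑' h : H, a (E.cosetArrow (E.cosetRep ξ) h (E.cosetRep η))

namespace IsIsotropySubgroup

variable {E} {x : G} {H : Set G} (hH : E.IsIsotropySubgroup x H)
include hH

lemma src_eq {h : G} (hh : h ∈ H) : E.src h = x := (hH.src_rng_eq h hh).1

lemma rng_eq {h : G} (hh : h ∈ H) : E.rng h = x := (hH.src_rng_eq h hh).2

abbrev group : Group H where
  mul h h' := ⟨E.mul h h', hH.mul_mem _ h.2 _ h'.2⟩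
  one := ⟨x, hH.one_mem⟩
  inv h := ⟨E.inv h, hH.inv_mem _ h.2⟩
  mul_assoc a b c := Subtype.ext <| E.mul_assoc _ _ _
    (by rw [hH.src_eq a.2, hH.rng_eq b.2]) (by rw [hH.src_eq b.2, hH.rng_eq c.2])
  one_mul a := Subtype.ext <| E.mul_eq_self_of_rng_eq (hH.rng_eq a.2)
  mul_one a := Subtype.ext <| E.mul_eq_self_of_src_eq (hH.src_eq a.2)
  inv_mul_cancel a := Subtype.ext <| (E.inv_mul_self a).trans (hH.src_eq a.2)

variable {u v w h h' k : G}

lemma src_mul_of_mem (hu : E.src u = x) (hh : h ∈ H) : E.src (E.mul u h) = x := by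
  simp [E.src_mul, hu, hH.src_eq hh, hH.rng_eq hh]

lemma rng_mul_of_mem (hu : E.src u = x) (hh : h ∈ H) : E.rng (E.mul u h) = E.rng u := by
  simp [E.rng_mul, hu, hH.rng_eq hh]

lemma src_cosetArrow (hu : E.src u = x) (hv : E.src v = x) (hh : h ∈ H) :
    E.src (E.cosetArrow u h v) = E.rng v := by
  simp [cosetArrow, E.src_mul, hu, hv, hH.src_eq hh, hH.rng_eq hh]

lemma rng_cosetArrow (hu : E.src u = x) (hv : E.src v = x) (hh : h ∈ H) :
    E.rng (E.cosetArrow u h v) = E.rng u := by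
  simp [cosetArrow, E.src_mul, E.rng_mul, hu, hv, hH.src_eq hh, hH.rng_eq hh]

lemma cosetArrow_mul_self (hu : E.src u = x) (hv : E.src v = x) (hh : h ∈ H) :
    E.mul (E.cosetArrow u h v) v = E.mul u h := by
  rw [cosetArrow, E.mul_assoc _ _ _ (by simp [hH.src_mul_of_mem hu hh, hv]) (by simp),
    E.inv_mul_self, hv, E.mul_eq_self_of_src_eq (hH.src_mul_of_mem hu hh)]

lemma inv_cosetArrow (hu : E.src u = x) (hv : E.src v = x) (hh : h ∈ H) :
    E.inv (E.cosetArrow u h v) = E.cosetArrow v (E.inv h) u := by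
  rw [cosetArrow, cosetArrow, E.inv_mul_rev (by simp [hH.src_mul_of_mem hu hh, hv]),
    E.inv_mul_rev (by rw [hu, hH.rng_eq hh]), E.inv_involutive,
    E.mul_assoc _ _ _ (by simp [hH.src_eq hh, hv]) (by simp [hH.rng_eq hh, hu])]

lemma cosetArrow_mul_cosetArrow (hu : E.src u = x) (hv : E.src v = x) (hw : E.src w = x)
    (hh : h ∈ H) (hh' : h' ∈ H) :
    E.mul (E.cosetArrow u h w) (E.cosetArrow w h' v) = E.cosetArrow u (E.mul h h') v := by
  have hwv : E.src (E.mul w h') = E.rng (E.inv v) := by simp [hH.src_mul_of_mem hw hh', hv]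
  rw [cosetArrow, E.mul_assoc _ _ _ (by simp [hH.src_mul_of_mem hu hh, hw])
      (by simp [hH.rng_cosetArrow hw hv hh']), cosetArrow,
    ← E.mul_assoc _ _ _ (by simp [hH.rng_mul_of_mem hw hh']) hwv,
    E.inv_mul_mul_cancel (by rw [hw, hH.rng_eq hh']),
    ← E.mul_assoc _ _ _ (by simp [hH.src_mul_of_mem hu hh, hH.rng_eq hh'])
      (by simp [hH.src_eq hh', hv]),
    E.mul_assoc u h h' (by simp [hu, hH.rng_eq hh]) (by simp [hH.src_eq hh, hH.rng_eq hh']),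
    cosetArrow]

lemma cosetArrow_mul_left (hu : E.src u = x) (hk : k ∈ H) (hh : h ∈ H) :
    E.cosetArrow (E.mul u k) h v = E.cosetArrow u (E.mul k h) v := by
  rw [cosetArrow, cosetArrow, E.mul_assoc u k h (by simp [hu, hH.rng_eq hk])
    (by simp [hH.src_eq hk, hH.rng_eq hh])]

lemma cosetArrow_mul_right (hu : E.src u = x) (hv : E.src v = x) (hk : k ∈ H)
    (hh : h ∈ H) :
    E.cosetArrow u h (E.mul v k) = E.cosetArrow u (E.mul h (E.inv k)) v := by
  rw [cosetArrow, cosetArrow, E.inv_mul_rev (by simp [hv, hH.rng_eq hk]),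
    ← E.mul_assoc _ _ _ (by simp [hH.src_mul_of_mem hu hh, hH.src_eq hk])
      (by simp [hv, hH.rng_eq hk]),
    E.mul_assoc u h _ (by simp [hu, hH.rng_eq hh]) (by simp [hH.src_eq hh, hH.src_eq hk])]

lemma cosetRel_equivalence : Equivalence (E.cosetRel x H) where
  refl u := ⟨x, hH.one_mem, E.mul_eq_self_of_src_eq u.2⟩
  symm := by
    rintro u v ⟨k, hk, huv⟩
    exact ⟨E.inv k, hH.inv_mem k hk,
      by rw [← huv, E.mul_mul_inv_cancel (by rw [u.2, hH.rng_eq hk])]⟩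
  trans := by
    rintro u v w ⟨k, hk, huv⟩ ⟨k', hk', hvw⟩
    refine ⟨E.mul k k', hH.mul_mem k hk k' hk', ?_⟩
    rw [← hvw, ← huv, E.mul_assoc _ _ _ (by rw [u.2, hH.rng_eq hk])
      (by rw [hH.src_eq hk, hH.rng_eq hk'])]

lemma cosetRel_of_mk_eq {u v : E.srcFiber x} (h : Quot.mk (E.cosetRel x H) u = Quot.mk _ v) :
    E.cosetRel x H u v :=
  hH.cosetRel_equivalence.eqvGen_iff.1 (Quot.eq.1 h)

lemma exists_mul_eq_cosetRep (u : E.srcFiber x) :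
    ∃ k ∈ H, E.mul u.1 k = E.cosetRep (Quot.mk (E.cosetRel x H) u) :=
  hH.cosetRel_of_mk_eq (Quot.out_eq _).symm

lemma mk_eq_mk_of_mul_eq {u v : E.srcFiber x} (hh : h ∈ H) (hh' : h' ∈ H)
    (huv : E.mul u.1 h = E.mul v.1 h') : Quot.mk (E.cosetRel x H) u = Quot.mk _ v :=
  (Quot.sound (⟨h, hh, rfl⟩ : E.cosetRel x H u ⟨_, hH.src_mul_of_mem u.2 hh⟩)).trans <|
    (Quot.sound (⟨h', hh', huv.symm⟩ : E.cosetRel x H v ⟨_, hH.src_mul_of_mem u.2 hh⟩)).symm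

lemma cosetArrow_injective (hu : E.src u = x) (hv : E.src v = x) :
    Function.Injective fun h : H => E.cosetArrow u h v := by
  intro h h' hhh'
  have := congrArg (E.mul · v) hhh'
  simp only [hH.cosetArrow_mul_self hu hv h.2, hH.cosetArrow_mul_self hu hv h'.2] at this
  exact Subtype.ext <|
    E.mul_left_cancel (by rw [hu, hH.rng_eq h.2]) (by rw [hu, hH.rng_eq h'.2]) this

lemma cosetArrow_cosetRep_left_injective (hv : E.src v = x) :
    Function.Injective fun p : E.CosetSpace x H × H => E.cosetArrow (E.cosetRep p.1) p.2 v := by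
  rintro ⟨ξ, h⟩ ⟨ξ', h'⟩ hξξ'
  have hmul := congrArg (E.mul · v) hξξ'
  simp only [hH.cosetArrow_mul_self (E.src_cosetRep ξ) hv h.2,
    hH.cosetArrow_mul_self (E.src_cosetRep ξ') hv h'.2] at hmul
  obtain rfl : ξ = ξ' := by
    rw [← Quot.out_eq ξ, ← Quot.out_eq ξ', hH.mk_eq_mk_of_mul_eq h.2 h'.2 hmul]
  obtain rfl := hH.cosetArrow_injective (E.src_cosetRep ξ) hv hξξ'
  rfl

lemma cosetArrow_cosetRep_right_injective (hu : E.src u = x) :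
    Function.Injective fun p : E.CosetSpace x H × H => E.cosetArrow u p.2 (E.cosetRep p.1) := by
  let _ := hH.group
  rintro ⟨η, h⟩ ⟨η', h'⟩ hηη'
  have hinv := congrArg E.inv hηη'
  simp only [hH.inv_cosetArrow hu (E.src_cosetRep η) h.2,
    hH.inv_cosetArrow hu (E.src_cosetRep η') h'.2] at hinv
  have := hH.cosetArrow_cosetRep_left_injective hu (a₁ := (η, h⁻¹)) (a₂ := (η', h'⁻¹)) hinv
  simp_all

lemma exists_cosetArrow_cosetRep_eq (hu : E.src u = x) {p : G} (hp : E.rng p = E.rng u) :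
    ∃ (η : E.CosetSpace x H) (h : H), E.cosetArrow u h (E.cosetRep η) = p := by
  have hw : E.src (E.mul (E.inv p) u) = x := by simp [E.src_mul, hp, hu]
  obtain ⟨k, hk, hwk⟩ := hH.exists_mul_eq_cosetRep ⟨_, hw⟩
  refine ⟨Quot.mk _ ⟨_, hw⟩, ⟨k, hk⟩, ?_⟩
  rw [← hwk, hH.cosetArrow_mul_right hu hw hk hk, E.mul_inv_self, hH.rng_eq hk, cosetArrow,
    E.mul_eq_self_of_src_eq hu, E.inv_mul_rev (by simp [hp]), E.inv_involutive,
    ← E.mul_assoc _ _ _ (by simp) (by simp [hp]), E.mul_inv_self,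
    E.mul_eq_self_of_rng_eq hp]

lemma tsum_enorm_cosetArrow_le (a : G → ℂ) {u v : G} (hu : E.src u = x) (hv : E.src v = x) :
    ∑' h : H, ‖a (E.cosetArrow u h v)‖ₑ ≤ ∑' k : {k // E.src k = E.rng v}, ‖a k‖ₑ :=
  ENNReal.tsum_comp_le_tsum_of_injective (f := fun h : H =>
    (⟨E.cosetArrow u h v, hH.src_cosetArrow hu hv h.2⟩ : {k // E.src k = E.rng v}))
    (fun _ _ e => hH.cosetArrow_injective hu hv (congrArg Subtype.val e)) fun k => ‖a k‖ₑ

lemma tsum_enorm_cosetArrow_cosetRep_le (a : G → ℂ) {u : G} (hu : E.src u = x) :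
    ∑' p : E.CosetSpace x H × H, ‖a (E.cosetArrow u p.2 (E.cosetRep p.1))‖ₑ ≤
      ∑' k : {k // E.rng k = E.rng u}, ‖a k‖ₑ :=
  ENNReal.tsum_comp_le_tsum_of_injective
    (f := fun p : E.CosetSpace x H × H => (⟨E.cosetArrow u p.2 (E.cosetRep p.1),
      hH.rng_cosetArrow hu (E.src_cosetRep p.1) p.2.2⟩ : {k // E.rng k = E.rng u}))
    (fun _ _ e => hH.cosetArrow_cosetRep_right_injective hu (congrArg Subtype.val e))
    fun k => ‖a k‖ₑ

lemma tsum_enorm_cosetRep_cosetArrow_le (a : G → ℂ) {v : G} (hv : E.src v = x) :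
    ∑' p : E.CosetSpace x H × H, ‖a (E.cosetArrow (E.cosetRep p.1) p.2 v)‖ₑ ≤
      ∑' k : {k // E.src k = E.rng v}, ‖a k‖ₑ :=
  ENNReal.tsum_comp_le_tsum_of_injective
    (f := fun p : E.CosetSpace x H × H => (⟨E.cosetArrow (E.cosetRep p.1) p.2 v,
      hH.src_cosetArrow (E.src_cosetRep p.1) hv p.2.2⟩ : {k // E.src k = E.rng v}))
    (fun _ _ e => hH.cosetArrow_cosetRep_left_injective hv (congrArg Subtype.val e))
    fun k => ‖a k‖ₑ

lemma tsum_enorm_cosetKernel_row_le (a : G → ℂ) (ξ : E.CosetSpace x H) :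
    ∑' η, ‖E.cosetKernel a ξ η‖ₑ ≤ ∑' k : {k // E.rng k = E.rng (E.cosetRep ξ)}, ‖a k‖ₑ :=
  calc ∑' η, ‖E.cosetKernel a ξ η‖ₑ
      ≤ ∑' η, ∑' h : H, ‖a (E.cosetArrow (E.cosetRep ξ) h (E.cosetRep η))‖ₑ :=
        ENNReal.tsum_le_tsum fun _ => enorm_tsum_le_tsum_enorm
    _ = ∑' p : E.CosetSpace x H × H, ‖a (E.cosetArrow (E.cosetRep ξ) p.2 (E.cosetRep p.1))‖ₑ :=
        ENNReal.tsum_prod.symm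
    _ ≤ _ := hH.tsum_enorm_cosetArrow_cosetRep_le a (E.src_cosetRep ξ)

lemma tsum_enorm_cosetKernel_col_le (a : G → ℂ) (η : E.CosetSpace x H) :
    ∑' ξ, ‖E.cosetKernel a ξ η‖ₑ ≤ ∑' k : {k // E.src k = E.rng (E.cosetRep η)}, ‖a k‖ₑ :=
  calc ∑' ξ, ‖E.cosetKernel a ξ η‖ₑ
      ≤ ∑' ξ, ∑' h : H, ‖a (E.cosetArrow (E.cosetRep ξ) h (E.cosetRep η))‖ₑ :=
        ENNReal.tsum_le_tsum fun _ => enorm_tsum_le_tsum_enorm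
    _ = ∑' p : E.CosetSpace x H × H, ‖a (E.cosetArrow (E.cosetRep p.1) p.2 (E.cosetRep η))‖ₑ :=
        ENNReal.tsum_prod.symm
    _ ≤ _ := hH.tsum_enorm_cosetRep_cosetArrow_le a (E.src_cosetRep η)

lemma schurBounded_cosetKernel {a : G → ℂ} (ha : a ∈ fiberBounded E.src ⊓ fiberBounded E.rng) :
    SchurBounded (E.cosetKernel (x := x) (H := H) a) := by
  obtain ⟨⟨C, hC⟩, ⟨C', hC'⟩⟩ := ha
  refine ⟨max C C', fun ξ => ?_, fun η => ?_⟩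
  · exact (hH.tsum_enorm_cosetKernel_row_le a ξ).trans <| (hC' _).trans (by simp)
  · exact (hH.tsum_enorm_cosetKernel_col_le a η).trans <| (hC _).trans (by simp)

lemma summable_cosetArrow {a : G → ℂ} (ha : a ∈ fiberBounded E.src) {u v : G}
    (hu : E.src u = x) (hv : E.src v = x) : Summable fun h : H => a (E.cosetArrow u h v) := by
  obtain ⟨C, hC⟩ := ha
  exact .of_enorm <| ne_top_of_le_ne_top ENNReal.coe_ne_top <|
    (hH.tsum_enorm_cosetArrow_le a hu hv).trans (hC _)

lemma cosetKernel_add {a b : G → ℂ} (ha : a ∈ fiberBounded E.src) (hb : b ∈ fiberBounded E.src)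
    (ξ η : E.CosetSpace x H) :
    E.cosetKernel (a + b) ξ η = E.cosetKernel a ξ η + E.cosetKernel b ξ η :=
  (hH.summable_cosetArrow ha (E.src_cosetRep ξ) (E.src_cosetRep η)).tsum_add
    (hH.summable_cosetArrow hb (E.src_cosetRep ξ) (E.src_cosetRep η))

omit hH in
lemma cosetKernel_smul (c : ℂ) (a : G → ℂ) (ξ η : E.CosetSpace x H) :
    E.cosetKernel (c • a) ξ η = c * E.cosetKernel a ξ η :=
  tsum_mul_left

lemma cosetKernel_mk_mk (a : G → ℂ) {u v : G} (hu : E.src u = x) (hv : E.src v = x) :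
    E.cosetKernel a (Quot.mk (E.cosetRel x H) ⟨u, hu⟩) (Quot.mk _ ⟨v, hv⟩) =
      ∑' h : H, a (E.cosetArrow u h v) := by
  let _ := hH.group
  obtain ⟨k, hk, huk⟩ := hH.exists_mul_eq_cosetRep ⟨u, hu⟩
  obtain ⟨k', hk', hvk'⟩ := hH.exists_mul_eq_cosetRep ⟨v, hv⟩
  unfold cosetKernel
  rw [← huk, ← hvk']
  refine (tsum_congr fun h => ?_).trans
    (((Equiv.mulRight (⟨k', hk'⟩ : H)⁻¹).trans (Equiv.mulLeft ⟨k, hk⟩)).tsum_eq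
      fun h : H => a (E.cosetArrow u h v))
  rw [hH.cosetArrow_mul_right (hH.src_mul_of_mem hu hk) hv hk' h.2,
    hH.cosetArrow_mul_left hu hk (hH.mul_mem _ h.2 _ (hH.inv_mem _ hk'))]
  rfl

lemma cosetKernel_starFun (a : G → ℂ) (ξ η : E.CosetSpace x H) :
    E.cosetKernel (E.starFun a) ξ η = star (E.cosetKernel a η ξ) := by
  let _ := hH.group
  rw [cosetKernel, cosetKernel, tsum_star, ← (Equiv.inv H).tsum_eq]
  refine tsum_congr fun h => ?_
  rw [starFun, Equiv.inv_apply, hH.inv_cosetArrow (E.src_cosetRep ξ) (E.src_cosetRep η) h⁻¹.2]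
  exact congrArg (star ∘ a ∘ (E.cosetArrow _ · _)) (E.inv_involutive h)

noncomputable def factorization {u v : G} (hu : E.src u = x) (hv : E.src v = x)
    (q : E.CosetSpace x H × H × H) :
    Σ h : H, {p : G × G // E.src p.1 = E.rng p.2 ∧ E.mul p.1 p.2 = E.cosetArrow u h v} :=
  ⟨⟨E.mul q.2.1 q.2.2, hH.mul_mem _ q.2.1.2 _ q.2.2.2⟩,
    (E.cosetArrow u q.2.1 (E.cosetRep q.1), E.cosetArrow (E.cosetRep q.1) q.2.2 v),
    by rw [hH.src_cosetArrow hu (E.src_cosetRep q.1) q.2.1.2,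
      hH.rng_cosetArrow (E.src_cosetRep q.1) hv q.2.2.2],
    hH.cosetArrow_mul_cosetArrow hu hv (E.src_cosetRep q.1) q.2.1.2 q.2.2.2⟩

lemma factorization_bijective {u v : G} (hu : E.src u = x) (hv : E.src v = x) :
    Function.Bijective (hH.factorization hu hv) := by
  let _ := hH.group
  constructor
  · rintro ⟨ζ₁, h₁, h₁'⟩ ⟨ζ₂, h₂, h₂'⟩ he
    obtain ⟨rfl, rfl⟩ := Prod.ext_iff.1 <| hH.cosetArrow_cosetRep_right_injective hu
      (a₁ := (ζ₁, h₁)) (a₂ := (ζ₂, h₂)) (congrArg (fun j => j.2.1.1) he)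
    obtain rfl := hH.cosetArrow_injective (E.src_cosetRep ζ₁) hv (congrArg (fun j => j.2.1.2) he)
    rfl
  · rintro ⟨h, ⟨p, q⟩, hpq, hprod⟩
    have hp : E.rng p = E.rng u := by
      rw [← E.rng_mul p q hpq, hprod, hH.rng_cosetArrow hu hv h.2]
    obtain ⟨ζ, h', rfl⟩ := hH.exists_cosetArrow_cosetRep_eq hu hp
    refine ⟨(ζ, h', h'⁻¹ * h), Sigma.subtype_ext (mul_inv_cancel_left h' h) (Prod.ext rfl ?_)⟩
    calc E.cosetArrow (E.cosetRep ζ) (E.mul (E.inv h') h) v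
        = E.mul (E.cosetArrow (E.cosetRep ζ) (E.inv h') u) (E.cosetArrow u h v) :=
          (hH.cosetArrow_mul_cosetArrow (E.src_cosetRep ζ) hv hu h'⁻¹.2 h.2).symm
      _ = q := by
          rw [← hH.inv_cosetArrow hu (E.src_cosetRep ζ) h'.2, ← hprod, E.inv_mul_mul_cancel hpq]

lemma tsum_enorm_mul_factorization_le {a b : G → ℂ} {Ca Cb : ℝ≥0}
    (ha : ∀ c, ∑' k : {k // E.rng k = c}, ‖a k‖ₑ ≤ Ca)
    (hb : ∀ c, ∑' k : {k // E.src k = c}, ‖b k‖ₑ ≤ Cb) {u v : G} (hu : E.src u = x)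
    (hv : E.src v = x) :
    ∑' q : E.CosetSpace x H × H × H,
      ‖a (E.cosetArrow u q.2.1 (E.cosetRep q.1)) * b (E.cosetArrow (E.cosetRep q.1) q.2.2 v)‖ₑ ≤
      Ca * Cb :=
  calc _ = ∑' ζ : E.CosetSpace x H, ∑' h : H, ‖a (E.cosetArrow u h (E.cosetRep ζ))‖ₑ *
        ∑' h' : H, ‖b (E.cosetArrow (E.cosetRep ζ) h' v)‖ₑ := by
        simp_rw [ENNReal.tsum_prod', enorm_mul, ENNReal.tsum_mul_left]
    _ ≤ ∑' ζ : E.CosetSpace x H, ∑' h : H, ‖a (E.cosetArrow u h (E.cosetRep ζ))‖ₑ * Cb := by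
        gcongr with ζ h
        exact (hH.tsum_enorm_cosetArrow_le b (E.src_cosetRep ζ) hv).trans (hb _)
    _ = (∑' p : E.CosetSpace x H × H, ‖a (E.cosetArrow u p.2 (E.cosetRep p.1))‖ₑ) * Cb := by
        simp_rw [ENNReal.tsum_prod', ENNReal.tsum_mul_right]
    _ ≤ Ca * Cb := by
        gcongr
        exact (hH.tsum_enorm_cosetArrow_cosetRep_le a hu).trans (ha _)

lemma cosetKernel_convolution {a b : G → ℂ} (ha : a ∈ fiberBounded E.rng)
    (hb : b ∈ fiberBounded E.src) (ξ η : E.CosetSpace x H) :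
    E.cosetKernel (E.convolution a b) ξ η = ∑' ζ, E.cosetKernel a ξ ζ * E.cosetKernel b ζ η := by
  obtain ⟨Ca, hCa⟩ := ha
  obtain ⟨Cb, hCb⟩ := hb
  have hu := E.src_cosetRep ξ
  have hv := E.src_cosetRep η
  let F (j : Σ h : H, {p : G × G // E.src p.1 = E.rng p.2 ∧
      E.mul p.1 p.2 = E.cosetArrow (E.cosetRep ξ) h (E.cosetRep η)}) : ℂ :=
    a j.2.1.1 * b j.2.1.2
  have hFq : Summable (F ∘ hH.factorization hu hv) := .of_enorm <|
    ne_top_of_le_ne_top (by finiteness) (hH.tsum_enorm_mul_factorization_le hCa hCb hu hv)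
  let e := Equiv.ofBijective _ (hH.factorization_bijective hu hv)
  have hF : Summable F := e.summable_iff.1 hFq
  have hsa : Summable fun p : E.CosetSpace x H × H =>
      ‖a (E.cosetArrow (E.cosetRep ξ) p.2 (E.cosetRep p.1))‖ :=
    tsum_enorm_ne_top_iff_summable_norm.1 <| ne_top_of_le_ne_top (by finiteness)
      ((hH.tsum_enorm_cosetArrow_cosetRep_le a hu).trans (hCa _))
  calc E.cosetKernel (E.convolution a b) ξ η = ∑' j, F j := hF.tsum_sigma.symm
    _ = ∑' q, F (hH.factorization hu hv q) := (e.tsum_eq F).symm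
    _ = ∑' ζ, ∑' hh : H × H, F (hH.factorization hu hv (ζ, hh)) := hFq.tsum_prod
    _ = ∑' ζ, E.cosetKernel a ξ ζ * E.cosetKernel b ζ η := tsum_congr fun ζ =>
        (tsum_mul_tsum_of_summable_norm (hsa.prod_factor ζ)
          (hH.summable_cosetArrow ⟨Cb, hCb⟩ (E.src_cosetRep ζ) hv).norm).symm

noncomputable def quasiRegular :
    ↥(fiberBounded E.src ⊓ fiberBounded E.rng) →ₗ[ℂ] (E.L2 x H →L[ℂ] E.L2 x H) where
  toFun a := schurOp (E.cosetKernel a.1) (hH.schurBounded_cosetKernel a.2)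
  map_add' a b := schurOp_eq_add _ _ _ (hH.cosetKernel_add a.2.1 b.2.1)
  map_smul' c a := schurOp_eq_smul c _ _ (cosetKernel_smul c a.1)

end IsIsotropySubgroup

theorem exists_quasiRegular_representation
    (x : G) (H : Set G)
    (hHx : x ∈ H) (hHsub : ∀ h ∈ H, E.src h = x ∧ E.rng h = x)
    (hHmul : ∀ h ∈ H, ∀ h' ∈ H, E.mul h h' ∈ H)
    (hHinv : ∀ h ∈ H, E.inv h ∈ H) :
    ∃ L : Cc G →ₗ[ℂ] (E.L2 x H →L[ℂ] E.L2 x H),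
      (∀ (a : G → ℂ) (ha : a ∈ Cc G) (g₁ g₂ : G)
          (h₁ : E.src g₁ = x) (h₂ : E.src g₂ = x),
        @inner ℂ _ _ (E.delta x H g₂ h₂) (L ⟨a, ha⟩ (E.delta x H g₁ h₁)) =
          ∑' h : H, a (E.mul (E.mul g₂ (h : G)) (E.inv g₁))) ∧
      (∀ (a : G → ℂ) (ha : a ∈ Cc G) (hsa : E.starFun a ∈ Cc G),
        L ⟨E.starFun a, hsa⟩ = ContinuousLinearMap.adjoint (L ⟨a, ha⟩)) ∧
      (∀ (a b : G → ℂ) (ha : a ∈ Cc G) (hb : b ∈ Cc G)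
          (hab : E.convolution a b ∈ Cc G),
        L ⟨E.convolution a b, hab⟩ = (L ⟨a, ha⟩).comp (L ⟨b, hb⟩)) := by
  have hH : E.IsIsotropySubgroup x H := ⟨hHx, hHsub, hHmul, hHinv⟩
  have hCc := E.Cc_le_fiberBounded_src_inf_rng
  refine ⟨hH.quasiRegular ∘ₗ Submodule.inclusion hCc, fun a ha g₁ g₂ h₁ h₂ => ?_,
    fun a ha hsa => ?_, fun a b ha hb hab => ?_⟩
  · exact (lp.inner_single_one_left _ _).trans <|
      (schurOp_single_one_apply _ _ _).trans (hH.cosetKernel_mk_mk a h₂ h₁)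
  · exact schurOp_eq_adjoint _ _ (hH.cosetKernel_starFun a)
  · exact schurOp_eq_comp _ _ _ (hH.cosetKernel_convolution (hCc ha).2 (hCc hb).1)

end EtaleGroupoid
end
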